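/- arXiv:2511.14915 — 6 statements merged into one kernel-verified Lean document; each statement's English description precedes it below -/
import Mathlib

section
/- Let d ≥ 1, let T : ℝ^d → ℝ^d be nonexpansive, and let y⋆ ∈ ℝ^d satisfy T y⋆ = y⋆. Given y₀ ∈ ℝ^d, define the Optimal Halpern Method iterates by y_{k+1} = (1/(k+2))·y₀ + ((k+1)/(k+2))·T y_k for k = 0, 1, 2, …. Then for every integer N ≥ 1, ‖y_{N−1} − T y_{N−1}‖² ≤ 4‖y₀ − y⋆‖²/N². -/
open RealInnerProductSpace

section OhmAux

variable {E : Type*} [NormedAddCommGroup E] [InnerProductSpace ℝ E]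

/-- Cocoercivity of `I - T` for nonexpansive `T`. -/
lemma ohm_coco_aux (T : E → E) (hT : ∀ x y, ‖T x - T y‖ ≤ ‖x - y‖) (x z : E) :
    ‖(x - T x) - (z - T z)‖ ^ 2 ≤ 2 * ⟪(x - T x) - (z - T z), x - z⟫ := by
  have h := hT x z
  have h2 : ‖T x - T z‖ ^ 2 ≤ ‖x - z‖ ^ 2 := by
    have := norm_nonneg (T x - T z); nlinarith
  have hrw : T x - T z = (x - z) - ((x - T x) - (z - T z)) := by abel
  rw [hrw, norm_sub_sq_real] at h2
  rw [real_inner_comm]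
  linarith

/-- Lieder's potential is nonpositive along OHM iterates. -/
lemma ohm_potential_aux (T : E → E) (hT : ∀ x y, ‖T x - T y‖ ≤ ‖x - y‖)
    (y0 : E) (y : ℕ → E) (hy0 : y 0 = y0)
    (hrec : ∀ k : ℕ,
      y (k + 1) = ((1 : ℝ) / ((k : ℝ) + 2)) • y0 + (((k : ℝ) + 1) / ((k : ℝ) + 2)) • T (y k)) :
    ∀ k : ℕ, ((k : ℝ) * (k + 1) / 2) * ‖y k - T (y k)‖ ^ 2
        + ((k : ℝ) + 1) * ⟪y k - T (y k), y k - y0⟫ ≤ 0 := by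
  intro k
  induction k with
  | zero => simp [hy0]
  | succ k ih =>
    set u := y k - T (y k) with hu
    set v := y (k + 1) - T (y (k + 1)) with hv
    set w := y k - y0 with hw
    have hk2 : ((k : ℝ) + 2) ≠ 0 := by positivity
    have hTy : T (y k) = y k - u := by rw [hu]; abel
    have h1 : y (k + 1) - y k
        = (-(1 / ((k : ℝ) + 2))) • w - (((k : ℝ) + 1) / ((k : ℝ) + 2)) • u := by
      rw [hrec k, hTy, hw]
      match_scalars <;> field_simp <;> ring
    have h2 : y (k + 1) - y0 = (((k : ℝ) + 1) / ((k : ℝ) + 2)) • (w - u) := by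
      rw [hrec k, hTy, hw]
      match_scalars <;> field_simp <;> ring
    have hcoco := ohm_coco_aux T hT (y (k + 1)) (y k)
    rw [← hv, ← hu] at hcoco
    have hC : 0 ≤ ⟪v - u, y (k + 1) - y k⟫ - (1/2) * ‖v - u‖ ^ 2 := by linarith
    have hC2 : 0 ≤ (((k : ℝ) + 1) * ((k : ℝ) + 2)) *
        (⟪v - u, y (k + 1) - y k⟫ - (1/2) * ‖v - u‖ ^ 2) := by
      apply mul_nonneg (by positivity) hC
    have hvu : ‖v - u‖ ^ 2 = ‖v‖ ^ 2 - 2 * ⟪v, u⟫ + ‖u‖ ^ 2 := norm_sub_sq_real v u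
    have hinner : ⟪v - u, y (k + 1) - y k⟫
        = (-(1 / ((k : ℝ) + 2))) * (⟪v, w⟫ - ⟪u, w⟫)
          - (((k : ℝ) + 1) / ((k : ℝ) + 2)) * (⟪v, u⟫ - ‖u‖ ^ 2) := by
      rw [h1]
      simp [inner_sub_left, inner_sub_right, real_inner_smul_right,
        real_inner_self_eq_norm_sq, real_inner_comm u v]
      ring
    have hinner2 : ⟪v, y (k + 1) - y0⟫
        = (((k : ℝ) + 1) / ((k : ℝ) + 2)) * (⟪v, w⟫ - ⟪v, u⟫) := by
      rw [h2]
      simp [inner_sub_right, real_inner_smul_right]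
    have identity : (((k : ℝ) + 1) * ((k : ℝ) + 2) / 2) * ‖v‖ ^ 2
        + ((k : ℝ) + 2) * ⟪v, y (k + 1) - y0⟫
        = (((k : ℝ) * (k + 1) / 2) * ‖u‖ ^ 2 + ((k : ℝ) + 1) * ⟪u, w⟫)
          - (((k : ℝ) + 1) * ((k : ℝ) + 2)) *
            (⟪v - u, y (k + 1) - y k⟫ - (1/2) * ‖v - u‖ ^ 2) := by
      rw [hinner, hinner2, hvu]
      field_simp
      ring
    have goal' : (((k : ℝ) + 1) * ((k : ℝ) + 2) / 2) * ‖v‖ ^ 2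
        + ((k : ℝ) + 2) * ⟪v, y (k + 1) - y0⟫ ≤ 0 := by
      rw [identity]; linarith
    push_cast
    push_cast at goal'
    linarith

end OhmAux

/-- **Optimal Halpern Method rate.**
Let `d ≥ 1`, `T : ℝ^d → ℝ^d` nonexpansive, `y⋆` a fixed point of `T`. Given `y₀`, the
OHM iterates `y_{k+1} = (1/(k+2))·y₀ + ((k+1)/(k+2))·T y_k` satisfy, for every `N ≥ 1`,
`‖y_{N−1} − T y_{N−1}‖² ≤ 4‖y₀ − y⋆‖²/N²`. -/
theorem ohm_rate (d : ℕ) (hd : 1 ≤ d)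
    (T : EuclideanSpace ℝ (Fin d) → EuclideanSpace ℝ (Fin d))
    (hT : ∀ x y, ‖T x - T y‖ ≤ ‖x - y‖)
    (ystar : EuclideanSpace ℝ (Fin d)) (hfix : T ystar = ystar)
    (y0 : EuclideanSpace ℝ (Fin d)) (y : ℕ → EuclideanSpace ℝ (Fin d))
    (hy0 : y 0 = y0)
    (hrec : ∀ k : ℕ,
      y (k + 1) = ((1 : ℝ) / ((k : ℝ) + 2)) • y0 + (((k : ℝ) + 1) / ((k : ℝ) + 2)) • T (y k))
    (N : ℕ) (hN : 1 ≤ N) :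
    ‖y (N - 1) - T (y (N - 1))‖ ^ 2 ≤ 4 * ‖y0 - ystar‖ ^ 2 / (N : ℝ) ^ 2 := by
  obtain ⟨n, rfl⟩ : ∃ n, N = n + 1 := ⟨N - 1, (Nat.succ_pred_eq_of_pos hN).symm⟩
  simp only [Nat.add_sub_cancel]
  set u := y n - T (y n) with hu
  set r := ‖u‖ with hr
  set B := ‖y0 - ystar‖ with hB
  have hpot := ohm_potential_aux T hT y0 y hy0 hrec n
  rw [← hu, ← hr] at hpot
  have hc := ohm_coco_aux T hT (y n) ystar
  rw [hfix] at hc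
  simp only [sub_self, sub_zero] at hc
  rw [← hu, ← hr] at hc
  have hcs : -(r * B) ≤ ⟪u, ystar - y0⟫ := by
    have h1 := abs_real_inner_le_norm u (ystar - y0)
    have h2 : ‖ystar - y0‖ = B := by rw [hB, norm_sub_rev]
    rw [h2] at h1
    have := abs_le.mp h1
    linarith [this.1]
  have hsplit : ⟪u, y n - y0⟫ = ⟪u, y n - ystar⟫ + ⟪u, ystar - y0⟫ := by
    rw [← inner_add_right]; congr 1; abel
  have hrB : ((n : ℝ) + 1) * r ≤ 2 * B := by
    have hr0 : 0 ≤ r := norm_nonneg u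
    have hB0 : 0 ≤ B := norm_nonneg _
    nlinarith [hpot, hc, hcs, hsplit, sq_nonneg r]
  have hN2 : (0 : ℝ) < ((n : ℝ) + 1) ^ 2 := by positivity
  have hfinal : r ^ 2 * (((n : ℝ) + 1) ^ 2) ≤ 4 * B ^ 2 := by
    have hr0 : 0 ≤ r := norm_nonneg u
    nlinarith [hrB, mul_nonneg hr0 (norm_nonneg (y0 - ystar))]
  have : r ^ 2 ≤ 4 * B ^ 2 / ((n : ℝ) + 1) ^ 2 := by
    rw [le_div_iff₀ hN2]; linarith
  push_cast
  push_cast at this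
  linarith
end

section
/- Let real numbers h_{i,j} be given for all 1 ≤ j ≤ i. Define D(k) = Σ_{m=0}^{k−1} (−1)^m·P(k−1,m) for k ≥ 1 (so D(1) = 1). Then for every k ≥ 1, D(k+1) = D(k) − Σ_{j=1}^{k} h_{k,j}·D(j) = (1 − h_{k,k})·D(k) − Σ_{j=1}^{k−1} h_{k,j}·D(j). -/
open Finset

/-- `Pinv H k m` is `P(k,m;H)`: the sum over all index sequences
`1 ≤ j(1) ≤ i(1) < j(2) ≤ i(2) < ⋯ < j(m) ≤ i(m) ≤ k` of `∏_{r} h_{i(r),j(r)}`,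
with `P(k,0;H) = 1`. -/
noncomputable def Pinv (H : ℕ → ℕ → ℝ) (k : ℕ) : ℕ → ℝ
  | 0 => 1
  | m + 1 =>
    ∑ f : Fin (m + 1) → Fin (k + 1) × Fin (k + 1),
      if (∀ r, 1 ≤ ((f r).2 : ℕ) ∧ ((f r).2 : ℕ) ≤ ((f r).1 : ℕ)) ∧
          (∀ r : Fin m, ((f r.castSucc).1 : ℕ) < ((f r.succ).2 : ℕ)) then
        ∏ r, H ((f r).1 : ℕ) ((f r).2 : ℕ)
      else 0

/-- `Qinv H k m j` is `Q(k,m,j;H)`: the partial sum of `P(k,m;H)` over those index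
sequences with `j(1) = j` (zero if no such sequence exists, and zero for `m = 0`). -/
noncomputable def Qinv (H : ℕ → ℕ → ℝ) (k : ℕ) : ℕ → ℕ → ℝ
  | 0, _ => 0
  | m + 1, j =>
    ∑ f : Fin (m + 1) → Fin (k + 1) × Fin (k + 1),
      if (∀ r, 1 ≤ ((f r).2 : ℕ) ∧ ((f r).2 : ℕ) ≤ ((f r).1 : ℕ)) ∧
          (∀ r : Fin m, ((f r.castSucc).1 : ℕ) < ((f r.succ).2 : ℕ)) ∧
          ((f 0).2 : ℕ) = j then
        ∏ r, H ((f r).1 : ℕ) ((f r).2 : ℕ)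
      else 0

/-- The H-certificates `λ*_{k,j}(H)`:
`λ*_{N,j}(H) = N·Σ_{m=1}^{N−j} (−1)^{m−1}·Q(N−1,m,j;H)` for `j = 1,…,N−1`, and
`λ*_{k,j}(H) = N·Σ_{ℓ=1}^{N−j} Σ_{m=1}^{N−k} (−1)^{ℓ+m−1}·C(ℓ+m,m)·Q(N−1,ℓ,j;H)·Q(N−1,m,k;H)`
for `1 ≤ j < k ≤ N−1`. -/
noncomputable def lamStar (N : ℕ) (H : ℕ → ℕ → ℝ) (k j : ℕ) : ℝ :=
  if k = N then
    (N : ℝ) * ∑ m ∈ Finset.Icc 1 (N - j), (-1 : ℝ) ^ (m - 1) * Qinv H (N - 1) m j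
  else
    (N : ℝ) * ∑ l ∈ Finset.Icc 1 (N - j), ∑ m ∈ Finset.Icc 1 (N - k),
      (-1 : ℝ) ^ (l + m - 1) * (Nat.choose (l + m) m : ℝ) *
        Qinv H (N - 1) l j * Qinv H (N - 1) m k

/-- `Dfun h k = D(k) = Σ_{m=0}^{k−1} (−1)^m·P(k−1,m)` (so `D(1) = 1`). -/
noncomputable def Dfun (h : ℕ → ℕ → ℝ) (k : ℕ) : ℝ :=
  ∑ m ∈ Finset.range k, (-1 : ℝ) ^ m * Pinv h (k - 1) m


/-- pairwise condition at level `k` on `ℕ`-valued index sequences. -/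
def PCaux (k : ℕ) {m : ℕ} (f : Fin m → ℕ × ℕ) : Prop :=
  (∀ r, 1 ≤ (f r).2 ∧ (f r).2 ≤ (f r).1 ∧ (f r).1 ≤ k) ∧
  ∀ r s : Fin m, r < s → (f r).1 < (f s).2

instance (k m : ℕ) (f : Fin m → ℕ × ℕ) : Decidable (PCaux k f) := by
  unfold PCaux; infer_instance

/-- `ℕ`-indexed version of `Pinv`, with ambient bound `K` and level `k`. -/
noncomputable def Pn (h : ℕ → ℕ → ℝ) (K k m : ℕ) : ℝ :=
  ∑ f ∈ Fintype.piFinset (fun _ : Fin m => Finset.Iic K ×ˢ Finset.Iic K),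
    if PCaux k f then ∏ r, h (f r).1 (f r).2 else 0

lemma FS_eq_Pn (h : ℕ → ℕ → ℝ) (K k m : ℕ) :
    (∑ f : Fin m → Fin (K+1) × Fin (K+1),
      if PCaux k (fun r => (((f r).1 : ℕ), ((f r).2 : ℕ))) then
        ∏ r, h ((f r).1 : ℕ) ((f r).2 : ℕ) else 0) = Pn h K k m := by
  unfold Pn
  refine Finset.sum_bij' (fun f _ => fun r => (((f r).1 : ℕ), ((f r).2 : ℕ)))
    (fun g hg => fun r =>
      ((⟨(g r).1, Nat.lt_succ_of_le (Finset.mem_Iic.mp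
        (Finset.mem_product.mp (Fintype.mem_piFinset.mp hg r)).1)⟩ : Fin (K+1)),
       (⟨(g r).2, Nat.lt_succ_of_le (Finset.mem_Iic.mp
        (Finset.mem_product.mp (Fintype.mem_piFinset.mp hg r)).2)⟩ : Fin (K+1))))
    ?_ ?_ ?_ ?_ ?_
  · intro f _
    rw [Fintype.mem_piFinset]
    intro r
    simp [Fin.is_le]
  · intro g hg; exact Finset.mem_univ _
  · intro f _; funext r; simp
  · intro g hg; funext r; simp
  · intro f _; rfl

lemma Pn_K_eq (h : ℕ → ℕ → ℝ) {K k : ℕ} (m : ℕ) (hkK : k ≤ K) :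
    Pn h K k m = Pn h k k m := by
  unfold Pn
  refine (Finset.sum_subset ?_ ?_).symm
  · intro g hg
    rw [Fintype.mem_piFinset] at hg ⊢
    intro a
    have := hg a
    simp only [Finset.mem_product, Finset.mem_Iic] at this ⊢
    omega
  · intro g _ hg'
    rw [if_neg]
    intro hc
    apply hg'
    rw [Fintype.mem_piFinset]
    intro a
    have h1 := hc.1 a
    simp only [Finset.mem_product, Finset.mem_Iic]
    omega

lemma chain_aux {m : ℕ} (f : Fin (m+1) → ℕ × ℕ)
    (h1 : ∀ r, (f r).2 ≤ (f r).1)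
    (h2 : ∀ r : Fin m, (f r.castSucc).1 < (f r.succ).2) :
    ∀ r s : Fin (m+1), r < s → (f r).1 < (f s).2 := by
  have key : ∀ n (r s : Fin (m+1)), (s : ℕ) = (r : ℕ) + n + 1 → (f r).1 < (f s).2 := by
    intro n
    induction n with
    | zero =>
      intro r s hs
      have hr : (r : ℕ) < m := by omega
      have := h2 ⟨(r : ℕ), hr⟩
      have e1 : (⟨(r : ℕ), hr⟩ : Fin m).castSucc = r := by
        ext; simp
      have e2 : (⟨(r : ℕ), hr⟩ : Fin m).succ = s := by
        ext; simp [hs]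
      rwa [e1, e2] at this
    | succ n ih =>
      intro r s hs
      have hsm : (s : ℕ) - 1 < m + 1 := by omega
      have h3 : (f r).1 < (f ⟨(s : ℕ) - 1, hsm⟩).2 := ih r _ (by simp; omega)
      have hsm' : (s : ℕ) - 1 < m := by omega
      have h4 := h2 ⟨(s : ℕ) - 1, hsm'⟩
      have e1 : (⟨(s : ℕ) - 1, hsm'⟩ : Fin m).castSucc = ⟨(s : ℕ) - 1, hsm⟩ := by
        ext; simp
      have e2 : (⟨(s : ℕ) - 1, hsm'⟩ : Fin m).succ = s := by
        ext; simp; omega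
      rw [e1, e2] at h4
      calc (f r).1 < (f ⟨(s : ℕ) - 1, hsm⟩).2 := h3
        _ ≤ (f ⟨(s : ℕ) - 1, hsm⟩).1 := h1 _
        _ < (f s).2 := h4
  intro r s hrs
  exact key ((s : ℕ) - (r : ℕ) - 1) r s (by have := hrs; omega)

lemma snoc_pairwise {m : ℕ} (g : Fin m → ℕ × ℕ) (p : ℕ × ℕ) :
    (∀ r s : Fin (m+1), r < s →
      ((Fin.snoc g p : Fin (m+1) → ℕ × ℕ) r).1 < ((Fin.snoc g p : Fin (m+1) → ℕ × ℕ) s).2)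
    ↔ ((∀ r s : Fin m, r < s → (g r).1 < (g s).2) ∧ ∀ r : Fin m, (g r).1 < p.2) := by
  constructor
  · intro H
    refine ⟨fun r s hrs => ?_, fun r => ?_⟩
    · have := H r.castSucc s.castSucc (by simpa using hrs)
      simpa using this
    · have := H r.castSucc (Fin.last m) (Fin.castSucc_lt_last r)
      simpa using this
  · rintro ⟨H1, H2⟩ r s hrs
    induction s using Fin.lastCases with
    | last =>
      obtain ⟨r', rfl⟩ := Fin.exists_castSucc_eq.mpr (Fin.ne_last_of_lt hrs)
      simpa using H2 r'
    | cast s' =>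
      obtain ⟨r', rfl⟩ := Fin.exists_castSucc_eq.mpr
        (Fin.ne_last_of_lt (lt_trans hrs (Fin.castSucc_lt_last s')))
      simp only [Fin.snoc_castSucc]
      exact H1 r' s' (by simpa using hrs)

lemma PC_snoc {k m : ℕ} (g : Fin m → ℕ × ℕ) (p : ℕ × ℕ) :
    PCaux k (Fin.snoc g p : Fin (m+1) → ℕ × ℕ) ↔
      ((1 ≤ p.2 ∧ p.2 ≤ p.1 ∧ p.1 ≤ k) ∧ PCaux (p.2 - 1) g) := by
  unfold PCaux
  rw [Fin.forall_fin_succ', snoc_pairwise]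
  simp only [Fin.snoc_castSucc, Fin.snoc_last]
  constructor
  · rintro ⟨⟨hb, hp⟩, hpair, hlast⟩
    exact ⟨hp, fun r => by have := hb r; have := hlast r; omega, hpair⟩
  · rintro ⟨hp, hb, hpair⟩
    refine ⟨⟨fun r => by have := hb r; omega, hp⟩, hpair, fun r => by have := hb r; omega⟩

lemma Pn_succ (h : ℕ → ℕ → ℝ) {K k : ℕ} (m : ℕ) (hkK : k ≤ K) :
    Pn h K k (m+1) = ∑ i ∈ Finset.Icc 1 k, ∑ j ∈ Finset.Icc 1 i, h i j * Pn h K (j-1) m := by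
  rw [← FS_eq_Pn]
  rw [← Equiv.sum_comp (Fin.snocEquiv (fun _ : Fin (m+1) => Fin (K+1) × Fin (K+1)))]
  have happ : ∀ q : (Fin (K+1) × Fin (K+1)) × (Fin m → Fin (K+1) × Fin (K+1)),
      (Fin.snocEquiv (fun _ : Fin (m+1) => Fin (K+1) × Fin (K+1))) q = Fin.snoc q.2 q.1 := fun _ => rfl
  simp only [happ]
  rw [Fintype.sum_prod_type]
  have hterm : ∀ (p : Fin (K+1) × Fin (K+1)) (g : Fin m → Fin (K+1) × Fin (K+1)),
      (if PCaux k (fun r => ((((Fin.snoc g p : Fin (m+1) → _) r).1 : ℕ),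
          (((Fin.snoc g p : Fin (m+1) → _) r).2 : ℕ))) then
        ∏ r : Fin (m+1), h (((Fin.snoc g p : Fin (m+1) → _) r).1 : ℕ)
          (((Fin.snoc g p : Fin (m+1) → _) r).2 : ℕ) else 0)
      = if (1 ≤ (p.2 : ℕ) ∧ (p.2 : ℕ) ≤ (p.1 : ℕ) ∧ (p.1 : ℕ) ≤ k) ∧
            PCaux ((p.2 : ℕ) - 1) (fun r => (((g r).1 : ℕ), ((g r).2 : ℕ))) then
          (∏ r, h ((g r).1 : ℕ) ((g r).2 : ℕ)) * h (p.1 : ℕ) (p.2 : ℕ) else 0 := by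
    intro p g
    have e : (fun r => ((((Fin.snoc g p : Fin (m+1) → _) r).1 : ℕ),
        (((Fin.snoc g p : Fin (m+1) → _) r).2 : ℕ)))
        = (Fin.snoc (fun r => (((g r).1 : ℕ), ((g r).2 : ℕ))) (((p.1 : ℕ), (p.2 : ℕ)))
            : Fin (m+1) → ℕ × ℕ) := by
      have := Fin.comp_snoc (fun x : Fin (K+1) × Fin (K+1) => (((x.1 : ℕ), (x.2 : ℕ)))) g p
      funext r
      have := congrFun this r
      simpa [Function.comp_def] using this
    have eprod : ∀ r : Fin (m+1), h (((Fin.snoc g p : Fin (m+1) → _) r).1 : ℕ)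
        (((Fin.snoc g p : Fin (m+1) → _) r).2 : ℕ)
        = (Fin.snoc (fun r => h ((g r).1 : ℕ) ((g r).2 : ℕ)) (h (p.1 : ℕ) (p.2 : ℕ))
            : Fin (m+1) → ℝ) r := by
      intro r
      induction r using Fin.lastCases with
      | last => simp
      | cast r' => simp
    have e2 : (∏ r : Fin (m+1), h (((Fin.snoc g p : Fin (m+1) → _) r).1 : ℕ)
        (((Fin.snoc g p : Fin (m+1) → _) r).2 : ℕ))
        = (∏ r, h ((g r).1 : ℕ) ((g r).2 : ℕ)) * h (p.1 : ℕ) (p.2 : ℕ) := by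
      rw [Finset.prod_congr rfl (fun r _ => eprod r), Fin.prod_snoc]
    rw [e, e2]
    exact if_congr (PC_snoc _ _) rfl rfl
  simp only [hterm]
  have hinner : ∀ p : Fin (K+1) × Fin (K+1),
      (∑ g : Fin m → Fin (K+1) × Fin (K+1),
        if (1 ≤ (p.2 : ℕ) ∧ (p.2 : ℕ) ≤ (p.1 : ℕ) ∧ (p.1 : ℕ) ≤ k) ∧
            PCaux ((p.2 : ℕ) - 1) (fun r => (((g r).1 : ℕ), ((g r).2 : ℕ))) then
          (∏ r, h ((g r).1 : ℕ) ((g r).2 : ℕ)) * h (p.1 : ℕ) (p.2 : ℕ) else 0)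
      = if 1 ≤ (p.2 : ℕ) ∧ (p.2 : ℕ) ≤ (p.1 : ℕ) ∧ (p.1 : ℕ) ≤ k then
          h (p.1 : ℕ) (p.2 : ℕ) * Pn h K ((p.2 : ℕ) - 1) m else 0 := by
    intro p
    by_cases hp : 1 ≤ (p.2 : ℕ) ∧ (p.2 : ℕ) ≤ (p.1 : ℕ) ∧ (p.1 : ℕ) ≤ k
    · rw [if_pos hp, ← FS_eq_Pn, Finset.mul_sum]
      refine Finset.sum_congr rfl fun g _ => ?_
      by_cases hg : PCaux ((p.2 : ℕ) - 1) (fun r => (((g r).1 : ℕ), ((g r).2 : ℕ)))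
      · rw [if_pos ⟨hp, hg⟩, if_pos hg]; ring
      · rw [if_neg (fun hc => hg hc.2), if_neg hg]; ring
    · rw [if_neg hp]
      exact Finset.sum_eq_zero fun g _ => if_neg (fun hc => hp hc.1)
  simp only [hinner]
  -- now reduce sum over pairs to the Icc double sum
  rw [Fintype.sum_prod_type]
  have step1 : ∀ a : Fin (K+1), (∑ b : Fin (K+1),
      if 1 ≤ (b : ℕ) ∧ (b : ℕ) ≤ (a : ℕ) ∧ (a : ℕ) ≤ k then
        h (a : ℕ) (b : ℕ) * Pn h K ((b : ℕ) - 1) m else 0)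
      = ∑ b ∈ Finset.range (K+1),
        if 1 ≤ b ∧ b ≤ (a : ℕ) ∧ (a : ℕ) ≤ k then h (a : ℕ) b * Pn h K (b - 1) m else 0 :=
    fun a => Fin.sum_univ_eq_sum_range
      (fun b => if 1 ≤ b ∧ b ≤ (a : ℕ) ∧ (a : ℕ) ≤ k then h (a : ℕ) b * Pn h K (b - 1) m else 0)
      (K+1)
  simp only [step1]
  rw [Fin.sum_univ_eq_sum_range (fun a => ∑ b ∈ Finset.range (K+1),
    if 1 ≤ b ∧ b ≤ a ∧ a ≤ k then h a b * Pn h K (b - 1) m else 0) (K+1)]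
  symm
  calc ∑ i ∈ Finset.Icc 1 k, ∑ j ∈ Finset.Icc 1 i, h i j * Pn h K (j-1) m
      = ∑ i ∈ Finset.Icc 1 k, ∑ j ∈ Finset.range (K+1),
          (if 1 ≤ j ∧ j ≤ i ∧ i ≤ k then h i j * Pn h K (j-1) m else 0) := by
        refine Finset.sum_congr rfl fun i hi => ?_
        simp only [Finset.mem_Icc] at hi
        calc ∑ j ∈ Finset.Icc 1 i, h i j * Pn h K (j-1) m
            = ∑ j ∈ Finset.Icc 1 i,
                (if 1 ≤ j ∧ j ≤ i ∧ i ≤ k then h i j * Pn h K (j-1) m else 0) := by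
              refine Finset.sum_congr rfl fun j hj => ?_
              simp only [Finset.mem_Icc] at hj
              rw [if_pos]
              omega
          _ = ∑ j ∈ Finset.range (K+1),
                (if 1 ≤ j ∧ j ≤ i ∧ i ≤ k then h i j * Pn h K (j-1) m else 0) := by
              refine Finset.sum_subset ?_ ?_
              · intro x hx
                simp only [Finset.mem_Icc] at hx
                simp only [Finset.mem_range]
                omega
              · intro x _ hx'
                simp only [Finset.mem_Icc] at hx'
                rw [if_neg]
                omega
    _ = ∑ i ∈ Finset.range (K+1), ∑ j ∈ Finset.range (K+1),
          (if 1 ≤ j ∧ j ≤ i ∧ i ≤ k then h i j * Pn h K (j-1) m else 0) := by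
        refine Finset.sum_subset ?_ ?_
        · intro x hx
          simp only [Finset.mem_Icc] at hx
          simp only [Finset.mem_range]
          omega
        · intro x hx hx'
          simp only [Finset.mem_Icc] at hx'
          refine Finset.sum_eq_zero fun j _ => ?_
          rw [if_neg]
          omega

lemma Pinv_eq_Pn (h : ℕ → ℕ → ℝ) (k m : ℕ) : Pinv h k m = Pn h k k m := by
  cases m with
  | zero =>
    have : Fintype.piFinset (fun _ : Fin 0 => Finset.Iic k ×ˢ Finset.Iic k)
        = {fun r : Fin 0 => r.elim0} := by
      ext g
      simp only [Fintype.mem_piFinset, Finset.mem_singleton]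
      constructor
      · intro _; funext r; exact r.elim0
      · intro _ r; exact r.elim0
    rw [show Pinv h k 0 = 1 from rfl]
    unfold Pn
    rw [this, Finset.sum_singleton, if_pos]
    · simp
    · exact ⟨fun r => r.elim0, fun r => r.elim0⟩
  | succ m =>
    rw [← FS_eq_Pn]
    show (∑ f : Fin (m+1) → Fin (k+1) × Fin (k+1),
      if (∀ r, 1 ≤ ((f r).2 : ℕ) ∧ ((f r).2 : ℕ) ≤ ((f r).1 : ℕ)) ∧
          (∀ r : Fin m, ((f r.castSucc).1 : ℕ) < ((f r.succ).2 : ℕ)) then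
        ∏ r, h ((f r).1 : ℕ) ((f r).2 : ℕ)
      else 0) = _
    refine Finset.sum_congr rfl fun f _ => ?_
    have hiff : ((∀ r, 1 ≤ ((f r).2 : ℕ) ∧ ((f r).2 : ℕ) ≤ ((f r).1 : ℕ)) ∧
        (∀ r : Fin m, ((f r.castSucc).1 : ℕ) < ((f r.succ).2 : ℕ)))
        ↔ PCaux k (fun r => (((f r).1 : ℕ), ((f r).2 : ℕ))) := by
      unfold PCaux
      constructor
      · rintro ⟨hb, hadj⟩
        refine ⟨fun r => ⟨(hb r).1, (hb r).2, Fin.is_le _⟩, ?_⟩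
        exact chain_aux (fun r => (((f r).1 : ℕ), ((f r).2 : ℕ)))
          (fun r => (hb r).2) hadj
      · rintro ⟨hb, hpair⟩
        exact ⟨fun r => ⟨(hb r).1, (hb r).2.1⟩,
          fun r => hpair r.castSucc r.succ Fin.castSucc_lt_succ⟩
    rw [if_congr hiff rfl rfl]

lemma Pn_vanish (h : ℕ → ℕ → ℝ) : ∀ m k, k < m → Pn h k k m = 0 := by
  intro m
  induction m with
  | zero => intro k hk; omega
  | succ m ih =>
    intro k hk
    rw [Pn_succ h m le_rfl]
    refine Finset.sum_eq_zero fun i hi => Finset.sum_eq_zero fun j hj => ?_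
    simp only [Finset.mem_Icc] at hi hj
    rw [Pn_K_eq h m (by omega), ih (j-1) (by omega)]
    ring

lemma Dfun_ext (h : ℕ → ℕ → ℝ) (j n : ℕ) (h1 : 1 ≤ j) (hn : j ≤ n) :
    Dfun h j = ∑ m ∈ Finset.range n, (-1 : ℝ)^m * Pn h (j-1) (j-1) m := by
  unfold Dfun
  rw [Finset.sum_congr rfl (fun m _ => by rw [Pinv_eq_Pn])]
  refine Finset.sum_subset (Finset.range_subset_range.mpr hn) fun m hm hm' => ?_
  simp only [Finset.mem_range] at hm hm'
  rw [Pn_vanish h m (j-1) (by omega)]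
  ring

lemma Dkey (h : ℕ → ℕ → ℝ) (k : ℕ) :
    Dfun h (k+1) = 1 - ∑ i ∈ Finset.Icc 1 k, ∑ j ∈ Finset.Icc 1 i, h i j * Dfun h j := by
  have h0 : Dfun h (k+1) = ∑ m ∈ Finset.range (k+1), (-1 : ℝ)^m * Pn h k k m := by
    unfold Dfun
    simp only [Nat.add_sub_cancel]
    exact Finset.sum_congr rfl fun m _ => by rw [Pinv_eq_Pn]
  rw [h0, Finset.sum_range_succ']
  have h1 : (-1 : ℝ)^0 * Pn h k k 0 = 1 := by
    rw [← Pinv_eq_Pn]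
    show (-1 : ℝ)^0 * 1 = 1
    ring
  rw [h1]
  have key : (∑ m ∈ Finset.range k, (-1 : ℝ)^(m+1) * Pn h k k (m+1))
      = - ∑ i ∈ Finset.Icc 1 k, ∑ j ∈ Finset.Icc 1 i, h i j * Dfun h j := by
    calc ∑ m ∈ Finset.range k, (-1 : ℝ)^(m+1) * Pn h k k (m+1)
        = ∑ m ∈ Finset.range k, ∑ i ∈ Finset.Icc 1 k, ∑ j ∈ Finset.Icc 1 i,
            (-1 : ℝ)^(m+1) * (h i j * Pn h (j-1) (j-1) m) := by
          refine Finset.sum_congr rfl fun m _ => ?_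
          rw [Pn_succ h m le_rfl, Finset.mul_sum]
          refine Finset.sum_congr rfl fun i hi => ?_
          rw [Finset.mul_sum]
          refine Finset.sum_congr rfl fun j hj => ?_
          simp only [Finset.mem_Icc] at hi hj
          rw [Pn_K_eq h m (by omega)]
      _ = ∑ i ∈ Finset.Icc 1 k, ∑ j ∈ Finset.Icc 1 i, ∑ m ∈ Finset.range k,
            (-1 : ℝ)^(m+1) * (h i j * Pn h (j-1) (j-1) m) := by
          rw [Finset.sum_comm]
          exact Finset.sum_congr rfl fun i _ => Finset.sum_comm
      _ = - ∑ i ∈ Finset.Icc 1 k, ∑ j ∈ Finset.Icc 1 i, h i j * Dfun h j := by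
          rw [← Finset.sum_neg_distrib]
          refine Finset.sum_congr rfl fun i hi => ?_
          rw [← Finset.sum_neg_distrib]
          refine Finset.sum_congr rfl fun j hj => ?_
          simp only [Finset.mem_Icc] at hi hj
          rw [Dfun_ext h j k (by omega) (by omega), Finset.mul_sum,
            ← Finset.sum_neg_distrib]
          refine Finset.sum_congr rfl fun m _ => ?_
          ring
  rw [key]
  ring

/-- **D-recursion (Lemma 6.7).**
For every `k ≥ 1`,
`D(k+1) = D(k) − Σ_{j=1}^{k} h_{k,j}·D(j) = (1 − h_{k,k})·D(k) − Σ_{j=1}^{k−1} h_{k,j}·D(j)`. -/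
theorem D_recursion (h : ℕ → ℕ → ℝ) (k : ℕ) (hk : 1 ≤ k) :
    Dfun h (k + 1) = Dfun h k - (∑ j ∈ Finset.Icc 1 k, h k j * Dfun h j) ∧
    Dfun h (k + 1)
      = (1 - h k k) * Dfun h k - ∑ j ∈ Finset.Icc 1 (k - 1), h k j * Dfun h j := by
  obtain ⟨n, rfl⟩ : ∃ n, k = n + 1 := ⟨k - 1, by omega⟩
  have key1 := Dkey h (n+1)
  have key0 := Dkey h n
  have hsplit : ∑ i ∈ Finset.Icc 1 (n+1), ∑ j ∈ Finset.Icc 1 i, h i j * Dfun h j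
      = (∑ i ∈ Finset.Icc 1 n, ∑ j ∈ Finset.Icc 1 i, h i j * Dfun h j)
        + ∑ j ∈ Finset.Icc 1 (n+1), h (n+1) j * Dfun h j :=
    Finset.sum_Icc_succ_top (by omega) _
  have first : Dfun h (n+1+1) = Dfun h (n+1)
      - ∑ j ∈ Finset.Icc 1 (n+1), h (n+1) j * Dfun h j := by
    rw [key1, key0, hsplit]; ring
  refine ⟨first, ?_⟩
  have hsplit2 : ∑ j ∈ Finset.Icc 1 (n+1), h (n+1) j * Dfun h j
      = (∑ j ∈ Finset.Icc 1 n, h (n+1) j * Dfun h j)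
        + h (n+1) (n+1) * Dfun h (n+1) :=
    Finset.sum_Icc_succ_top (by omega) _
  rw [first, hsplit2]
  simp only [Nat.add_sub_cancel]
  ring
end

section
/- Let N ≥ 2 and let H be an H-matrix. Let M_N ∈ ℝ^{(N−1)×(N−1)} be the matrix whose (j,k) entry is δ_{j,k} − Σ_{i=max(j,k)}^{N−1} h_{i,j} (where δ_{j,k} is the Kronecker delta), i.e. the matrix whose first row is (1 − h_{1,1} − ⋯ − h_{N−1,1}, −h_{2,1} − ⋯ − h_{N−1,1}, …, −h_{N−1,1}) and whose last row is (−h_{N−1,N−1}, …, −h_{N−1,N−1}, 1 − h_{N−1,N−1}). Then det M_N = D(N;H) = Σ_{m=0}^{N−1} (−1)^m·P(N−1,m;H). -/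
open Finset

namespace DetMNAux

/-- the chain condition with bound `k`. -/
def cond (k : ℕ) {K m : ℕ} (f : Fin m → Fin K × Fin K) : Prop :=
  (∀ r, 1 ≤ ((f r).2 : ℕ) ∧ ((f r).2 : ℕ) ≤ ((f r).1 : ℕ) ∧ ((f r).1 : ℕ) ≤ k) ∧
  (∀ r s : Fin m, (r : ℕ) + 1 = (s : ℕ) → ((f r).1 : ℕ) < ((f s).2 : ℕ))

instance (k K m : ℕ) (f : Fin m → Fin K × Fin K) : Decidable (cond k f) := by
  unfold cond; infer_instance

noncomputable def PS (H : ℕ → ℕ → ℝ) (k K m : ℕ) : ℝ :=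
  ∑ f : Fin m → Fin (K + 1) × Fin (K + 1),
    if cond k f then ∏ r, H ((f r).1 : ℕ) ((f r).2 : ℕ) else 0

lemma cond_strictMono {k K m : ℕ} {f : Fin (m + 1) → Fin K × Fin K} (h : cond k f) :
    StrictMono (fun r => ((f r).1 : ℕ)) := by
  rw [Fin.strictMono_iff_lt_succ]
  intro r
  have h1 := h.2 r.castSucc r.succ (by simp)
  have h2 := (h.1 r.succ).2.1
  omega

lemma cond_le_last {k K m : ℕ} {f : Fin (m + 1) → Fin K × Fin K} (h : cond k f) (r : Fin (m+1)) :
    ((f r).1 : ℕ) ≤ ((f (Fin.last m)).1 : ℕ) :=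
  (cond_strictMono h).monotone (Fin.le_last r)

lemma cond_lb {k K m : ℕ} {f : Fin (m + 1) → Fin K × Fin K} (h : cond k f) (r : Fin (m+1)) :
    (r : ℕ) + 1 ≤ ((f r).1 : ℕ) := by
  induction r using Fin.induction with
  | zero => have := h.1 0; simp only [Fin.val_zero]; omega
  | succ r ih =>
      have h1 := h.2 r.castSucc r.succ (by simp)
      have h2 := (h.1 r.succ).2.1
      have h3 : ((r.castSucc : Fin (m+1)) : ℕ) = (r : ℕ) := by simp
      have := ih  -- note: ih is about castSucc r
      simp only [Fin.coe_castSucc] at this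
      simp only [Fin.val_succ]
      omega

lemma PS_eq_zero (H : ℕ → ℕ → ℝ) {k K m : ℕ} (h : k < m) : PS H k K m = 0 := by
  cases m with
  | zero => omega
  | succ m =>
      unfold PS
      apply Finset.sum_eq_zero
      intro f _
      rw [if_neg]
      intro hc
      have h1 := cond_lb hc (Fin.last m)
      have h2 := (hc.1 (Fin.last m)).2.2
      rw [Fin.val_last] at h1
      omega

lemma PS_cast (H : ℕ → ℕ → ℝ) {k K : ℕ} (m : ℕ) (hkK : k ≤ K) :
    PS H k K m = PS H k k m := by
  unfold PS
  rw [← Finset.sum_filter, ← Finset.sum_filter]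
  refine Finset.sum_nbij' (i := fun f => fun r => (⟨((f r).1 : ℕ) % (k+1), Nat.mod_lt _ k.succ_pos⟩,
      (⟨((f r).2 : ℕ) % (k+1), Nat.mod_lt _ k.succ_pos⟩ : Fin (k+1))))
    (j := fun g => fun r => ((Fin.castLE (by omega) (g r).1), (Fin.castLE (by omega) (g r).2)))
    ?_ ?_ ?_ ?_ ?_
  · intro f hf
    simp only [Finset.mem_filter, Finset.mem_univ, true_and] at hf ⊢
    obtain ⟨h1, h2⟩ := hf
    have hb : ∀ r, ((f r).1 : ℕ) % (k+1) = ((f r).1 : ℕ) ∧ ((f r).2 : ℕ) % (k+1) = ((f r).2 : ℕ) := by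
      intro r
      have := h1 r
      constructor <;> (apply Nat.mod_eq_of_lt; omega)
    constructor
    · intro r; have := h1 r; simp only [(hb r).1, (hb r).2]; exact this
    · intro r s hrs; have := h2 r s hrs; simp only [(hb r).1, (hb s).2]; exact this
  · intro g hg
    simp only [Finset.mem_filter, Finset.mem_univ, true_and] at hg ⊢
    obtain ⟨h1, h2⟩ := hg
    constructor
    · intro r; have := h1 r; simpa using ⟨this.1, this.2.1, this.2.2⟩
    · intro r s hrs; have := h2 r s hrs; simpa using this
  · intro f hf
    simp only [Finset.mem_filter, Finset.mem_univ, true_and] at hf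
    funext r
    have := hf.1 r
    ext <;> simp <;> omega
  · intro g hg
    simp only [Finset.mem_filter, Finset.mem_univ, true_and] at hg
    funext r
    have := hg.1 r
    ext <;> simp <;> omega
  · intro f hf
    simp only [Finset.mem_filter, Finset.mem_univ, true_and] at hf
    apply Finset.prod_congr rfl
    intro r _
    have := hf.1 r
    congr 1 <;> simp <;>
      first
      | omega
      | exact (Nat.mod_eq_of_lt (by omega)).symm
      | exact Nat.mod_eq_of_lt (by omega)

lemma pinv_eq (H : ℕ → ℕ → ℝ) (k m : ℕ) : Pinv H k m = PS H k k m := by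
  cases m with
  | zero =>
      unfold PS
      simp [Pinv, cond]
  | succ m =>
      unfold PS
      rw [Pinv]
      apply Finset.sum_congr rfl
      intro f _
      apply if_congr _ rfl rfl
      unfold cond
      constructor
      · rintro ⟨h1, h2⟩
        refine ⟨fun r => ⟨(h1 r).1, (h1 r).2, Fin.is_le _⟩, ?_⟩
        intro r s hrs
        have hr : (r : ℕ) < m := by omega
        have := h2 ⟨r, hr⟩
        have e1 : (⟨r, hr⟩ : Fin m).castSucc = r := by ext; simp
        have e2 : (⟨r, hr⟩ : Fin m).succ = s := by ext; simp; omega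
        rwa [e1, e2] at this
      · rintro ⟨h1, h2⟩
        exact ⟨fun r => ⟨(h1 r).1, (h1 r).2.1⟩, fun r => h2 r.castSucc r.succ (by simp)⟩

lemma cond_snoc {k K m : ℕ} (p : Fin m → Fin K × Fin K) (x : Fin K × Fin K) :
    cond k (Fin.snoc p x : Fin (m + 1) → Fin K × Fin K) ↔
      cond k p ∧ (1 ≤ (x.2 : ℕ) ∧ (x.2 : ℕ) ≤ (x.1 : ℕ) ∧ (x.1 : ℕ) ≤ k) ∧
      (∀ r : Fin m, (r : ℕ) + 1 = m → ((p r).1 : ℕ) < (x.2 : ℕ)) := by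
  constructor
  · intro h
    refine ⟨⟨fun r => ?_, fun r s hrs => ?_⟩, ?_, fun r hr => ?_⟩
    · have := h.1 r.castSucc; rwa [Fin.snoc_castSucc] at this
    · have := h.2 r.castSucc s.castSucc (by simpa using hrs)
      rwa [Fin.snoc_castSucc, Fin.snoc_castSucc] at this
    · have := h.1 (Fin.last m); rwa [Fin.snoc_last] at this
    · have := h.2 r.castSucc (Fin.last m) (by simp [hr])
      rwa [Fin.snoc_castSucc, Fin.snoc_last] at this
  · rintro ⟨⟨hb, hc⟩, hx, hl⟩
    constructor
    · intro r
      refine Fin.lastCases ?_ (fun i => ?_) r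
      · rw [Fin.snoc_last]; exact hx
      · rw [Fin.snoc_castSucc]; exact hb i
    · intro r s hrs
      have hrm : (r : ℕ) < m := by have := s.isLt; omega
      have hr2 : r = Fin.castSucc ⟨(r : ℕ), hrm⟩ := by ext; simp
      rw [hr2, Fin.snoc_castSucc]
      by_cases hs : (s : ℕ) = m
      · have hs2 : s = Fin.last m := by ext; simpa using hs
        rw [hs2, Fin.snoc_last]
        exact hl _ (by simpa using hrs.trans hs)
      · have hsm : (s : ℕ) < m := by have := s.isLt; omega
        have hs2 : s = Fin.castSucc ⟨(s : ℕ), hsm⟩ := by ext; simp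
        rw [hs2, Fin.snoc_castSucc]
        exact hc _ _ (by simpa using hrs)

lemma cond_lt_of_link {K' j m : ℕ} {p : Fin m → Fin K' × Fin K'} {k : ℕ} (h : cond k p)
    (hl : ∀ r : Fin m, (r : ℕ) + 1 = m → ((p r).1 : ℕ) < j) (r : Fin m) :
    ((p r).1 : ℕ) < j := by
  cases m with
  | zero => exact r.elim0
  | succ m =>
      have h1 := cond_le_last h r
      have h2 := hl (Fin.last m) (by simp)
      omega

lemma PS_succ (H : ℕ → ℕ → ℝ) (k m : ℕ) :
    PS H (k + 1) (k + 1) (m + 1) =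
      PS H k (k + 1) (m + 1) + ∑ a ∈ range (k + 1), H (k + 1) (a + 1) * PS H a (k + 1) m := by
  classical
  set β := Fin (k + 2) × Fin (k + 2) with hβ
  have split : ∀ f : Fin (m + 1) → β,
      (if cond (k + 1) f then ∏ r, H ((f r).1 : ℕ) ((f r).2 : ℕ) else 0) =
      (if cond k f then ∏ r, H ((f r).1 : ℕ) ((f r).2 : ℕ) else 0) +
      (if cond (k + 1) f ∧ ((f (Fin.last m)).1 : ℕ) = k + 1 then
        ∏ r, H ((f r).1 : ℕ) ((f r).2 : ℕ) else 0) := by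
    intro f
    by_cases h1 : cond (k + 1) f
    · by_cases h2 : ((f (Fin.last m)).1 : ℕ) = k + 1
      · have hcc : cond (k + 1) f ∧ ((f (Fin.last m)).1 : ℕ) = k + 1 := ⟨h1, h2⟩
        rw [if_pos h1, if_pos hcc, if_neg, zero_add]
        intro hc
        have := (hc.1 (Fin.last m)).2.2
        omega
      · have hk : cond k f := by
          refine ⟨fun r => ⟨(h1.1 r).1, (h1.1 r).2.1, ?_⟩, h1.2⟩
          have ha := cond_le_last h1 r
          have hb := (h1.1 (Fin.last m)).2.2
          omega
        rw [if_pos h1, if_pos hk, if_neg (fun hc => h2 hc.2), add_zero]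
    · rw [if_neg h1, if_neg, if_neg (fun hc => h1 hc.1), add_zero]
      intro hc
      exact h1 ⟨fun r => ⟨(hc.1 r).1, (hc.1 r).2.1, (hc.1 r).2.2.trans (by omega)⟩, hc.2⟩
  have e1 : PS H (k+1) (k+1) (m+1) = PS H k (k+1) (m+1) +
      ∑ f : Fin (m + 1) → β,
        (if cond (k + 1) f ∧ ((f (Fin.last m)).1 : ℕ) = k + 1 then
          ∏ r, H ((f r).1 : ℕ) ((f r).2 : ℕ) else 0) := by
    unfold PS
    rw [Finset.sum_congr rfl (fun f _ => split f), Finset.sum_add_distrib]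
  rw [e1]
  congr 1
  -- now compute the second sum
  rw [← Equiv.sum_comp (Fin.snocEquiv (fun _ => β))]
  rw [Fintype.sum_prod_type]
  have inner : ∀ b : β, ∑ p : Fin m → β,
      (if cond (k + 1) ((Fin.snocEquiv (fun _ => β)) (b, p)) ∧
          (((Fin.snocEquiv (fun _ => β)) (b, p) (Fin.last m)).1 : ℕ) = k + 1 then
        ∏ r, H (((Fin.snocEquiv (fun _ => β)) (b, p) r).1 : ℕ)
          (((Fin.snocEquiv (fun _ => β)) (b, p) r).2 : ℕ) else 0) =
      (if 1 ≤ (b.2 : ℕ) ∧ (b.1 : ℕ) = k + 1 then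
        H (b.1 : ℕ) (b.2 : ℕ) * PS H ((b.2 : ℕ) - 1) (k + 1) m else 0) := by
    intro b
    have hsnoc : ∀ p : Fin m → β, (Fin.snocEquiv (fun _ => β)) (b, p) = Fin.snoc p b := by
      intro p; funext r; simp [Fin.snocEquiv]
    simp only [hsnoc, Fin.snoc_last]
    have hprod : ∀ p : Fin m → β,
        (∏ r, H (((Fin.snoc p b : Fin (m+1) → β) r).1 : ℕ) (((Fin.snoc p b : Fin (m+1) → β) r).2 : ℕ))
        = (∏ r, H ((p r).1 : ℕ) ((p r).2 : ℕ)) * H (b.1 : ℕ) (b.2 : ℕ) := by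
      intro p
      rw [Fin.prod_univ_castSucc]
      simp [Fin.snoc_castSucc, Fin.snoc_last]
    by_cases hb : 1 ≤ (b.2 : ℕ) ∧ (b.1 : ℕ) = k + 1
    · rw [if_pos hb]
      have hcond : ∀ p : Fin m → β,
          (cond (k + 1) (Fin.snoc p b : Fin (m+1) → β) ∧ (b.1 : ℕ) = k + 1) ↔
          cond ((b.2 : ℕ) - 1) p := by
        intro p
        rw [cond_snoc]
        constructor
        · rintro ⟨⟨hp, hx, hl⟩, _⟩
          refine ⟨fun r => ⟨(hp.1 r).1, (hp.1 r).2.1, ?_⟩, hp.2⟩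
          have := cond_lt_of_link hp hl r
          omega
        · intro hp
          have hb2 : (b.2 : ℕ) ≤ k + 1 := by have := b.2.isLt; have := hb.2; omega
          refine ⟨⟨⟨fun r => ⟨(hp.1 r).1, (hp.1 r).2.1, by have := (hp.1 r).2.2; omega⟩, hp.2⟩,
            ⟨hb.1, by omega, by omega⟩, fun r hr => by have := (hp.1 r).2.2; omega⟩, hb.2⟩
        
      calc ∑ p : Fin m → β, (if cond (k + 1) (Fin.snoc p b : Fin (m+1) → β) ∧ (b.1 : ℕ) = k + 1 then
              ∏ r, H (((Fin.snoc p b : Fin (m+1) → β) r).1 : ℕ) (((Fin.snoc p b : Fin (m+1) → β) r).2 : ℕ) else 0)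
          = ∑ p : Fin m → β, (if cond ((b.2 : ℕ) - 1) p then
              (∏ r, H ((p r).1 : ℕ) ((p r).2 : ℕ)) * H (b.1 : ℕ) (b.2 : ℕ) else 0) := by
            apply Finset.sum_congr rfl
            intro p _
            rw [if_congr (hcond p) (hprod p) rfl]
        _ = (∑ p : Fin m → β, (if cond ((b.2 : ℕ) - 1) p then
              ∏ r, H ((p r).1 : ℕ) ((p r).2 : ℕ) else 0)) * H (b.1 : ℕ) (b.2 : ℕ) := by
            rw [Finset.sum_mul]
            apply Finset.sum_congr rfl
            intro p _
            rw [ite_mul, zero_mul]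
        _ = H (b.1 : ℕ) (b.2 : ℕ) * PS H ((b.2 : ℕ) - 1) (k + 1) m := by
            rw [mul_comm]; rfl
    · rw [if_neg hb]
      apply Finset.sum_eq_zero
      intro p _
      rw [if_neg]
      rintro ⟨hc, h1⟩
      rw [cond_snoc] at hc
      exact hb ⟨hc.2.1.1, h1⟩
  rw [Finset.sum_congr rfl (fun b _ => inner b)]
  -- now sum over b : β
  rw [Fintype.sum_prod_type]
  have colsum : ∀ b1 : Fin (k+2), (∑ b2 : Fin (k+2),
      if 1 ≤ (b2 : ℕ) ∧ (b1 : ℕ) = k + 1 then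
        H (b1 : ℕ) (b2 : ℕ) * PS H ((b2 : ℕ) - 1) (k + 1) m else 0) =
      if (b1 : ℕ) = k + 1 then
        ∑ a ∈ range (k + 1), H (k+1) (a + 1) * PS H a (k + 1) m else 0 := by
    intro b1
    by_cases h1 : (b1 : ℕ) = k + 1
    · rw [if_pos h1]
      rw [Fin.sum_univ_eq_sum_range (fun t => if 1 ≤ t ∧ (b1 : ℕ) = k+1 then
        H (b1:ℕ) t * PS H (t - 1) (k+1) m else 0) (k+2)]
      rw [Finset.sum_range_succ']
      simp only [h1, Nat.le_add_left, true_and, and_true, Nat.add_sub_cancel]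
      norm_num
    · rw [if_neg h1]
      apply Finset.sum_eq_zero
      intro b2 _
      rw [if_neg (fun hc => h1 hc.2)]
  rw [Finset.sum_congr rfl (fun b1 _ => colsum b1)]
  rw [Fin.sum_univ_eq_sum_range (fun t => if t = k+1 then
    ∑ a ∈ range (k + 1), H (k+1) (a + 1) * PS H a (k + 1) m else 0) (k+2)]
  rw [Finset.sum_range_succ]
  simp

lemma pinv_zero (H : ℕ → ℕ → ℝ) {k m : ℕ} (h : k < m) : Pinv H k m = 0 := by
  rw [pinv_eq]; exact PS_eq_zero H h

lemma pinv_succ (H : ℕ → ℕ → ℝ) (k m : ℕ) :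
    Pinv H (k + 1) (m + 1) =
      Pinv H k (m + 1) + ∑ a ∈ range (k + 1), H (k + 1) (a + 1) * Pinv H a m := by
  rw [pinv_eq, pinv_eq, PS_succ]
  rw [PS_cast H (m+1) (by omega)]
  congr 1
  apply Finset.sum_congr rfl
  intro a ha
  rw [PS_cast H m (by simp at ha; omega), pinv_eq]

noncomputable def D (H : ℕ → ℕ → ℝ) (k : ℕ) : ℝ :=
  ∑ m ∈ range (k + 1), (-1 : ℝ) ^ m * Pinv H k m

lemma D_trunc (H : ℕ → ℕ → ℝ) {a n : ℕ} (h : a ≤ n) :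
    ∑ m ∈ range (n + 1), (-1 : ℝ) ^ m * Pinv H a m = D H a := by
  unfold D
  exact (Finset.sum_subset (Finset.range_subset_range.2 (by omega))
    (fun x hx hx2 => by
      simp only [Finset.mem_range] at hx hx2
      rw [pinv_zero H (by omega), mul_zero])).symm

lemma D_succ (H : ℕ → ℕ → ℝ) (k : ℕ) :
    D H (k + 1) = D H k - ∑ a ∈ range (k + 1), H (k + 1) (a + 1) * D H a := by
  have hL : D H (k + 1) = (∑ m ∈ range (k + 1), (-1 : ℝ) ^ (m + 1) * Pinv H (k + 1) (m + 1)) + 1 := by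
    unfold D
    rw [Finset.sum_range_succ' (fun m => (-1 : ℝ) ^ m * Pinv H (k + 1) m)]
    norm_num [show Pinv H (k + 1) 0 = 1 from rfl]
  have hK : D H k = (∑ m ∈ range (k + 1), (-1 : ℝ) ^ (m + 1) * Pinv H k (m + 1)) + 1 := by
    unfold D
    have hs := Finset.sum_range_succ' (fun m => (-1 : ℝ) ^ m * Pinv H k m) (k + 1)
    rw [Finset.sum_range_succ, pinv_zero H (show k < k + 1 by omega), mul_zero, add_zero] at hs
    rw [hs]
    norm_num [show Pinv H k 0 = 1 from rfl]
  have e1 : (∑ m ∈ range (k + 1), (-1 : ℝ) ^ (m + 1) * Pinv H (k + 1) (m + 1)) =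
      (∑ m ∈ range (k + 1), (-1 : ℝ) ^ (m + 1) * Pinv H k (m + 1))
      - ∑ m ∈ range (k + 1), ∑ a ∈ range (k + 1),
          (-1 : ℝ) ^ m * (H (k + 1) (a + 1) * Pinv H a m) := by
    rw [← Finset.sum_sub_distrib]
    apply Finset.sum_congr rfl
    intro m _
    rw [pinv_succ H k m, mul_add, sub_eq_add_neg, ← Finset.sum_neg_distrib, Finset.mul_sum]
    congr 1
    exact Finset.sum_congr rfl fun a _ => by ring
  have e5 : (∑ m ∈ range (k + 1), ∑ a ∈ range (k + 1),
        (-1 : ℝ) ^ m * (H (k + 1) (a + 1) * Pinv H a m))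
      = ∑ a ∈ range (k + 1), H (k + 1) (a + 1) * D H a := by
    rw [Finset.sum_comm]
    apply Finset.sum_congr rfl
    intro a ha
    rw [← D_trunc H (show a ≤ k by simp at ha; omega), Finset.mul_sum]
    exact Finset.sum_congr rfl fun m _ => by ring
  rw [hL, hK, e1, e5]
  ring

noncomputable def Aent (H : ℕ → ℕ → ℝ) (a b : ℕ) : ℝ :=
  (if a = b then 1 else 0) - (if a = b + 1 then 1 else 0) - (if a ≤ b then H (b + 1) (a + 1) else 0)

noncomputable def Amat (H : ℕ → ℕ → ℝ) (k : ℕ) : Matrix (Fin k) (Fin k) ℝ :=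
  Matrix.of fun a b => Aent H a b

noncomputable def Bmat (H : ℕ → ℕ → ℝ) (k t : ℕ) : Matrix (Fin k) (Fin k) ℝ :=
  Matrix.of fun a b => if (b : ℕ) = k - 1 then -H t ((a : ℕ) + 1) else Aent H a b

lemma D_zero (H : ℕ → ℕ → ℝ) : D H 0 = 1 := by
  unfold D
  simp [show Pinv H 0 0 = 1 from rfl]

lemma detAB (H : ℕ → ℕ → ℝ) : ∀ k : ℕ, (Amat H (k + 1)).det = D H (k + 1) ∧
    ∀ t, (Bmat H (k + 1) t).det = -∑ a ∈ range (k + 1), H t (a + 1) * D H a := by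
  intro k
  induction k with
  | zero =>
      constructor
      · rw [Matrix.det_fin_one]
        have : (Amat H 1) 0 0 = 1 - H 1 1 := by
          simp [Amat, Aent]
        rw [this, D_succ, Finset.sum_range_one, D_zero]
        ring
      · intro t
        rw [Matrix.det_fin_one]
        have : (Bmat H 1 t) 0 0 = -H t 1 := by
          simp [Bmat]
        rw [this, Finset.sum_range_one, D_zero]
        ring
  | succ k ih =>
      -- expansion facts
      have hrowA : ∀ j : Fin k,
          (Amat H (k + 2)) (Fin.last (k + 1)) ((j.castSucc).castSucc) = 0 := by
        intro j
        have hj : (j : ℕ) < k := j.isLt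
        simp only [Amat, Matrix.of_apply, Aent, Fin.val_last, Fin.coe_castSucc]
        have h1 : ¬ (k + 1 = (j : ℕ)) := by omega
        have h2 : ¬ (k + 1 = (j : ℕ) + 1) := by omega
        have h3 : ¬ (k + 1 ≤ (j : ℕ)) := by omega
        rw [if_neg h1, if_neg h2, if_neg h3]
        ring
      have hrowB : ∀ t, ∀ j : Fin k,
          (Bmat H (k + 2) t) (Fin.last (k + 1)) ((j.castSucc).castSucc) = 0 := by
        intro t j
        have hj : (j : ℕ) < k := j.isLt
        simp only [Bmat, Matrix.of_apply, Fin.coe_castSucc]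
        rw [if_neg (by omega : ¬ ((j:ℕ) = k + 2 - 1))]
        simpa [Amat] using hrowA j
      have hsubA1 : (Amat H (k + 2)).submatrix (Fin.last (k + 1)).succAbove
          (Fin.last (k + 1)).succAbove = Amat H (k + 1) := by
        ext a b
        simp [Fin.succAbove_last, Amat, Matrix.submatrix_apply]
      have hcol : ∀ b : Fin (k + 1), (((Fin.last k).castSucc.succAbove b : Fin (k+2)) : ℕ)
          = if (b : ℕ) < k then (b : ℕ) else (b : ℕ) + 1 := by
        intro b
        by_cases hb : (b : ℕ) < k
        · rw [if_pos hb, Fin.succAbove_of_castSucc_lt]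
          · simp
          · rw [Fin.castSucc_lt_castSucc_iff]
            exact (Fin.lt_iff_val_lt_val ..).2 (by simpa using hb)
        · rw [if_neg hb, Fin.succAbove_of_le_castSucc]
          · simp
          · rw [Fin.castSucc_le_castSucc_iff]
            exact (Fin.le_iff_val_le_val ..).2 (by simp; omega)
      have hsubA2 : (Amat H (k + 2)).submatrix (Fin.last (k + 1)).succAbove
          ((Fin.last k).castSucc.succAbove) = Bmat H (k + 1) (k + 2) := by
        ext a b
        rw [Matrix.submatrix_apply, Fin.succAbove_last]
        show Aent H ((a.castSucc : Fin (k+2)) : ℕ) (((Fin.last k).castSucc.succAbove b : Fin (k+2)) : ℕ)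
          = Bmat H (k + 1) (k + 2) a b
        rw [hcol b, Fin.coe_castSucc]
        by_cases hb : (b : ℕ) < k
        · rw [if_pos hb]
          simp only [Bmat, Matrix.of_apply]
          rw [if_neg (by omega : ¬ ((b:ℕ) = k + 1 - 1))]
        · rw [if_neg hb]
          have hbk : (b : ℕ) = k := by have := b.isLt; omega
          simp only [Bmat, Matrix.of_apply]
          rw [if_pos (by omega : (b:ℕ) = k + 1 - 1)]
          have ha : (a : ℕ) ≤ k := by have := a.isLt; omega
          simp only [Aent, hbk]
          split_ifs <;> first | (exfalso; omega) | ring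
      have hsubB1 : ∀ t, (Bmat H (k + 2) t).submatrix (Fin.last (k + 1)).succAbove
          (Fin.last (k + 1)).succAbove = Amat H (k + 1) := by
        intro t
        ext a b
        rw [Matrix.submatrix_apply, Fin.succAbove_last]
        simp only [Bmat, Matrix.of_apply, Fin.coe_castSucc]
        rw [if_neg (by have := b.isLt; omega : ¬ ((b:ℕ) = k + 2 - 1))]
        simp [Amat, Aent]
      have hsubB2 : ∀ t, (Bmat H (k + 2) t).submatrix (Fin.last (k + 1)).succAbove
          ((Fin.last k).castSucc.succAbove) = Bmat H (k + 1) t := by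
        intro t
        ext a b
        rw [Matrix.submatrix_apply, Fin.succAbove_last]
        show (Bmat H (k+2) t) (a.castSucc) ((Fin.last k).castSucc.succAbove b) = _
        simp only [Bmat, Matrix.of_apply]
        rw [show ((((Fin.last k).castSucc.succAbove b) : Fin (k+2)) : ℕ)
          = if (b : ℕ) < k then (b : ℕ) else (b : ℕ) + 1 from hcol b]
        by_cases hb : (b : ℕ) < k
        · rw [if_pos hb, if_neg (by omega : ¬ ((b:ℕ) = k + 2 - 1)),
            if_neg (by omega : ¬ ((b:ℕ) = k + 1 - 1))]
          simp [Aent]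
        · have hbk : (b : ℕ) = k := by have := b.isLt; omega
          rw [if_neg hb, if_pos (by omega : (b:ℕ) + 1 = k + 2 - 1),
            if_pos (by omega : (b:ℕ) = k + 1 - 1)]
          simp
      -- entries on the last row
      have hAll : (Amat H (k + 2)) (Fin.last (k + 1)) (Fin.last (k + 1)) = 1 - H (k + 2) (k + 2) := by
        simp only [Amat, Matrix.of_apply, Aent, Fin.val_last]
        split_ifs <;> first | (exfalso; omega) | ring
      have hAlc : (Amat H (k + 2)) (Fin.last (k + 1)) ((Fin.last k).castSucc) = -1 := by
        simp only [Amat, Matrix.of_apply, Aent, Fin.val_last, Fin.coe_castSucc]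
        split_ifs <;> first | (exfalso; omega) | ring
      have hBll : ∀ t, (Bmat H (k + 2) t) (Fin.last (k + 1)) (Fin.last (k + 1)) = -H t (k + 2) := by
        intro t
        simp only [Bmat, Matrix.of_apply, Fin.val_last]
        split_ifs <;> first | (exfalso; omega) | rfl
      have hBlc : ∀ t, (Bmat H (k + 2) t) (Fin.last (k + 1)) ((Fin.last k).castSucc) = -1 := by
        intro t
        simp only [Bmat, Matrix.of_apply, Fin.val_last, Fin.coe_castSucc, Aent]
        split_ifs <;> first | (exfalso; omega) | ring
      have hsign1 : ((-1 : ℝ)) ^ (((Fin.last (k+1) : Fin (k+2)) : ℕ) + ((Fin.last (k+1) : Fin (k+2)) : ℕ)) = 1 := by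
        rw [Fin.val_last]
        exact Even.neg_one_pow ⟨k + 1, by ring⟩
      have hsign2 : ((-1 : ℝ)) ^ (((Fin.last (k+1) : Fin (k+2)) : ℕ) + (((Fin.last k).castSucc : Fin (k+2)) : ℕ)) = -1 := by
        rw [Fin.val_last, Fin.coe_castSucc, Fin.val_last]
        exact Odd.neg_one_pow ⟨k, by ring⟩
      have expandA : (Amat H (k + 2)).det =
          (1 - H (k + 2) (k + 2)) * (Amat H (k + 1)).det + (Bmat H (k + 1) (k + 2)).det := by
        rw [Matrix.det_succ_row (Amat H (k + 2)) (Fin.last (k + 1))]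
        rw [Fin.sum_univ_castSucc, Fin.sum_univ_castSucc]
        rw [Finset.sum_eq_zero (fun j _ => by rw [hrowA j]; ring)]
        rw [hAll, hAlc, hsign1, hsign2, hsubA1, hsubA2]
        ring
      have expandB : ∀ t, (Bmat H (k + 2) t).det =
          (Bmat H (k + 1) t).det - H t (k + 2) * (Amat H (k + 1)).det := by
        intro t
        rw [Matrix.det_succ_row (Bmat H (k + 2) t) (Fin.last (k + 1))]
        rw [Fin.sum_univ_castSucc, Fin.sum_univ_castSucc]
        rw [Finset.sum_eq_zero (fun j _ => by rw [hrowB t j]; ring)]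
        rw [hBll, hBlc, hsign1, hsign2, hsubB1, hsubB2]
        ring
      constructor
      · have hpeel : ∑ a ∈ range (k + 2), H (k + 2) (a + 1) * D H a
            = (∑ a ∈ range (k + 1), H (k + 2) (a + 1) * D H a) + H (k + 2) (k + 2) * D H (k + 1) :=
          Finset.sum_range_succ _ _
        rw [expandA, ih.1, (ih.2 (k + 2)), D_succ H (k + 1), hpeel]
        ring
      · intro t
        have hpeel : ∑ a ∈ range (k + 1 + 1), H t (a + 1) * D H a
            = (∑ a ∈ range (k + 1), H t (a + 1) * D H a) + H t (k + 2) * D H (k + 1) :=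
          Finset.sum_range_succ _ _
        rw [expandB t, ih.1, ih.2 t, hpeel]
        ring

lemma icc_peel (f : ℕ → ℝ) {c n : ℕ} (h : c ≤ n) :
    ∑ i ∈ Icc c n, f i = f c + ∑ i ∈ Icc (c + 1) n, f i := by
  rw [Finset.Icc_eq_cons_Ioc h, Finset.sum_cons, ← Finset.Icc_add_one_left_eq_Ioc]

end DetMNAux

open DetMNAux in
theorem det_MN_eq_DN' (N : ℕ) (hN : 2 ≤ N) (H : ℕ → ℕ → ℝ) :
    Matrix.det (Matrix.of fun a b : Fin (N - 1) =>
      (if a = b then (1 : ℝ) else 0)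
        - ∑ i ∈ Finset.Icc (max ((a : ℕ) + 1) ((b : ℕ) + 1)) (N - 1), H i ((a : ℕ) + 1))
      = ∑ m ∈ Finset.range N, (-1 : ℝ) ^ m * Pinv H (N - 1) m := by
  classical
  set M : Matrix (Fin (N-1)) (Fin (N-1)) ℝ := Matrix.of fun a b : Fin (N - 1) =>
      (if a = b then (1 : ℝ) else 0)
        - ∑ i ∈ Finset.Icc (max ((a : ℕ) + 1) ((b : ℕ) + 1)) (N - 1), H i ((a : ℕ) + 1) with hM
  set E : Matrix (Fin (N-1)) (Fin (N-1)) ℝ := Matrix.of fun c b : Fin (N - 1) =>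
      (if c = b then (1 : ℝ) else 0) - (if (c : ℕ) = (b : ℕ) + 1 then 1 else 0) with hEdef
  have hE : E.det = 1 := by
    rw [Matrix.det_of_lowerTriangular E]
    · apply Finset.prod_eq_one
      intro c _
      simp only [hEdef, Matrix.of_apply]
      rw [if_pos trivial, if_neg (show ¬((c:ℕ) = (c:ℕ) + 1) by omega)]
      ring
    · intro i j hij
      have hlt : (i : ℕ) < (j : ℕ) := hij
      simp only [hEdef, Matrix.of_apply]
      rw [if_neg (show ¬(i = j) by intro h; rw [Fin.ext_iff] at h; omega),
        if_neg (show ¬((i:ℕ) = (j:ℕ) + 1) by omega)]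
      ring
  have hME : M * E = Amat H (N - 1) := by
    ext a b
    rw [Matrix.mul_apply]
    have hterm : ∀ c : Fin (N-1), M a c * E c b
        = (if c = b then M a c else 0) - (if (c : ℕ) = (b : ℕ) + 1 then M a c else 0) := by
      intro c
      simp only [hEdef, Matrix.of_apply]
      rw [mul_sub, mul_ite, mul_one, mul_zero, mul_ite, mul_one, mul_zero]
    rw [Finset.sum_congr rfl (fun c _ => hterm c), Finset.sum_sub_distrib,
      Finset.sum_ite_eq' Finset.univ b (fun c => M a c)]
    simp only [Finset.mem_univ, if_pos]
    by_cases hb : (b : ℕ) + 1 < N - 1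
    · have hcond : ∀ c : Fin (N-1), ((c : ℕ) = (b : ℕ) + 1) ↔ c = ⟨(b:ℕ)+1, hb⟩ := by
        intro c; rw [Fin.ext_iff]
      rw [Finset.sum_congr rfl (fun c _ => by rw [if_congr (hcond c) rfl rfl]),
        Finset.sum_ite_eq' Finset.univ (⟨(b:ℕ)+1, hb⟩ : Fin (N-1)) (fun c => M a c)]
      simp only [Finset.mem_univ, if_pos]
      -- now explicit entries
      show ((if a = b then (1:ℝ) else 0)
          - ∑ i ∈ Finset.Icc (max ((a : ℕ) + 1) ((b : ℕ) + 1)) (N - 1), H i ((a : ℕ) + 1))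
        - ((if a = (⟨(b:ℕ)+1, hb⟩ : Fin (N-1)) then (1:ℝ) else 0)
          - ∑ i ∈ Finset.Icc (max ((a : ℕ) + 1) ((b : ℕ) + 1 + 1)) (N - 1), H i ((a : ℕ) + 1))
        = Aent H (a : ℕ) (b : ℕ)
      have hfin1 : (a = b) ↔ ((a:ℕ) = (b:ℕ)) := Fin.ext_iff
      have hfin2 : (a = (⟨(b:ℕ)+1, hb⟩ : Fin (N-1))) ↔ ((a:ℕ) = (b:ℕ)+1) := Fin.ext_iff
      rw [if_congr hfin1 rfl rfl, if_congr hfin2 rfl rfl]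
      unfold Aent
      by_cases hab : (a : ℕ) ≤ (b : ℕ)
      · have e1 : max ((a:ℕ)+1) ((b:ℕ)+1) = (b:ℕ)+1 := by omega
        have e2 : max ((a:ℕ)+1) ((b:ℕ)+1+1) = (b:ℕ)+1+1 := by omega
        rw [e1, e2, icc_peel (fun i => H i ((a:ℕ)+1)) (show (b:ℕ)+1 ≤ N-1 by omega)]
        split_ifs <;> first | (exfalso; omega) | ring
      · have e1 : max ((a:ℕ)+1) ((b:ℕ)+1) = (a:ℕ)+1 := by omega
        have e2 : max ((a:ℕ)+1) ((b:ℕ)+1+1) = (a:ℕ)+1 := by omega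
        rw [e1, e2]
        split_ifs <;> first | (exfalso; omega) | ring
    · have hbN : (b : ℕ) = N - 2 := by have := b.isLt; omega
      rw [Finset.sum_eq_zero (fun c _ => by
        rw [if_neg (by have := c.isLt; omega)])]
      show ((if a = b then (1:ℝ) else 0)
          - ∑ i ∈ Finset.Icc (max ((a : ℕ) + 1) ((b : ℕ) + 1)) (N - 1), H i ((a : ℕ) + 1)) - 0
        = Aent H (a : ℕ) (b : ℕ)
      have hfin1 : (a = b) ↔ ((a:ℕ) = (b:ℕ)) := Fin.ext_iff
      rw [if_congr hfin1 rfl rfl]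
      have e1 : max ((a:ℕ)+1) ((b:ℕ)+1) = N - 1 := by have := a.isLt; omega
      rw [e1, show Finset.Icc (N-1) (N-1) = {N-1} from Finset.Icc_self _, Finset.sum_singleton]
      unfold Aent
      have hb1 : (b:ℕ) + 1 = N - 1 := by omega
      rw [hb1]
      split_ifs <;> first | (exfalso; omega) | ring
  have hdet : M.det = (Amat H (N - 1)).det := by
    rw [← hME, Matrix.det_mul, hE, mul_one]
  obtain ⟨k, hk⟩ : ∃ k, N - 1 = k + 1 := ⟨N - 2, by omega⟩
  rw [hdet, hk, (detAB H k).1, ← hk]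
  unfold D
  rw [show N - 1 + 1 = N by omega]


/-- **Determinant of the coefficient matrix (Lemma 6.8).**
The matrix `M_N ∈ ℝ^{(N−1)×(N−1)}` with `(j,k)` entry
`δ_{j,k} − Σ_{i=max(j,k)}^{N−1} h_{i,j}` has determinant
`D(N;H) = Σ_{m=0}^{N−1} (−1)^m·P(N−1,m;H)`. -/
theorem det_MN_eq_DN (N : ℕ) (hN : 2 ≤ N) (H : ℕ → ℕ → ℝ) :
    Matrix.det (Matrix.of fun a b : Fin (N - 1) =>
      (if a = b then (1 : ℝ) else 0)
        - ∑ i ∈ Finset.Icc (max ((a : ℕ) + 1) ((b : ℕ) + 1)) (N - 1), H i ((a : ℕ) + 1))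
      = ∑ m ∈ Finset.range N, (-1 : ℝ) ^ m * Pinv H (N - 1) m := by
  exact det_MN_eq_DN' N hN H
end

section
/- Let N ≥ 2, let H be an H-matrix, let G ∈ ℝ^{N×N} be the worst-case matrix and T = I − 2G. Set y₀ = −(1/√N)(e₁ + ⋯ + e_N), run the H-matrix algorithm with T to get y₁,…,y_{N−1}, and set g_i = G y_{i−1} for i = 1,…,N. Then the Gram matrix G₀ ∈ ℝ^{(N+1)×(N+1)} with (G₀)_{i,j} = ⟨g_i, g_j⟩ for 1 ≤ i,j ≤ N, (G₀)_{i,N+1} = (G₀)_{N+1,i} = ⟨g_i, y₀⟩, and (G₀)_{N+1,N+1} = ‖y₀‖² satisfies: (a) (G₀)_{i,j} = (1/N)·Σ_{m=0}^{i−1} Σ_{n=0}^{j−1} (−1)^{m+n}·C(m+n,m)·P(i−1,m;H)·P(j−1,n;H) for 1 ≤ i,j ≤ N; (b) (G₀)_{i,N+1} = 1/N for 1 ≤ i ≤ N; (c) (G₀)_{N+1,N+1} = 1. -/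
open Finset

/-- The worst-case matrix `G ∈ ℝ^{N×N}`: diagonal entries `1/2`, subdiagonal entries `−1/2`,
top-right entry `G_{1,N} = 1/2`, all other entries `0`. -/
noncomputable def Gmat (N : ℕ) : Matrix (Fin N) (Fin N) ℝ := Matrix.of fun i j =>
  if i = j then 1 / 2
  else if (i : ℕ) = (j : ℕ) + 1 then -(1 / 2)
  else if (i : ℕ) = 0 ∧ (j : ℕ) = N - 1 then 1 / 2
  else 0

section comb
variable (H : ℕ → ℕ → ℝ)

lemma chain_lb {K m : ℕ} (f : Fin (m+1) → Fin (K+1) × Fin (K+1))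
    (h1 : ∀ r, 1 ≤ ((f r).2 : ℕ) ∧ ((f r).2 : ℕ) ≤ ((f r).1 : ℕ))
    (h2 : ∀ r : Fin m, ((f r.castSucc).1 : ℕ) < ((f r.succ).2 : ℕ)) :
    ∀ r : Fin (m+1), (r : ℕ) + 1 ≤ ((f r).1 : ℕ) := by
  intro r
  induction r using Fin.induction with
  | zero => exact le_trans (h1 0).1 (h1 0).2
  | succ i ih =>
      have hA := h2 i
      have hB := (h1 i.succ).2
      simp only [Fin.coe_castSucc] at ih hA
      simp only [Fin.val_succ]
      omega

lemma chain_ub {K m : ℕ} (f : Fin (m+1) → Fin (K+1) × Fin (K+1))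
    (h1 : ∀ r, 1 ≤ ((f r).2 : ℕ) ∧ ((f r).2 : ℕ) ≤ ((f r).1 : ℕ))
    (h2 : ∀ r : Fin m, ((f r.castSucc).1 : ℕ) < ((f r.succ).2 : ℕ)) :
    ∀ r : Fin (m+1), ((f r).1 : ℕ) ≤ ((f (Fin.last m)).1 : ℕ) := by
  intro r
  induction r using Fin.reverseInduction with
  | last => exact le_rfl
  | cast i ih =>
      have := h2 i
      have := (h1 i.succ).2
      omega

lemma Pinv_eq_zero {k m : ℕ} (h : k < m) : Pinv H k m = 0 := by
  obtain ⟨m, rfl⟩ : ∃ m', m = m' + 1 := ⟨m - 1, by omega⟩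
  rw [Pinv]
  refine Finset.sum_eq_zero fun f _ => ?_
  rw [if_neg]
  rintro ⟨h1, h2⟩
  have hA := chain_lb f h1 h2 (Fin.last m)
  have hB := (f (Fin.last m)).1.isLt
  simp only [Fin.val_last] at hA
  omega
end comb

section cast
variable (H : ℕ → ℕ → ℝ)

lemma Pinv_cast (K k m : ℕ) (hk : k ≤ K) :
    (∑ f : Fin (m + 1) → Fin (K + 1) × Fin (K + 1),
      if ((∀ r, 1 ≤ ((f r).2 : ℕ) ∧ ((f r).2 : ℕ) ≤ ((f r).1 : ℕ)) ∧
          (∀ r : Fin m, ((f r.castSucc).1 : ℕ) < ((f r.succ).2 : ℕ))) ∧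
          ((f (Fin.last m)).1 : ℕ) ≤ k then
        ∏ r, H ((f r).1 : ℕ) ((f r).2 : ℕ) else 0)
    = Pinv H k (m+1) := by
  classical
  rw [Pinv, ← Finset.sum_filter, ← Finset.sum_filter]
  refine Finset.sum_bij'
    (fun f hf => fun r => ((⟨((f r).1 : ℕ), by
        have hm := Finset.mem_filter.mp hf
        have h1 := hm.2.1.1
        have h2 := hm.2.1.2
        have h3 := hm.2.2
        have := chain_ub f h1 h2 r
        omega⟩ : Fin (k+1)), (⟨((f r).2 : ℕ), by
        have hm := Finset.mem_filter.mp hf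
        have h1 := hm.2.1.1
        have h2 := hm.2.1.2
        have h3 := hm.2.2
        have := chain_ub f h1 h2 r
        have := (h1 r).2
        omega⟩ : Fin (k+1))))
    (fun f _ => fun r => ((f r).1.castLE (by omega), (f r).2.castLE (by omega)))
    ?_ ?_ ?_ ?_ ?_
  · intro f hf
    simp only [Finset.mem_filter, Finset.mem_univ, true_and] at hf ⊢
    exact ⟨fun r => hf.1.1 r, fun r => hf.1.2 r⟩
  · intro f hf
    simp only [Finset.mem_filter, Finset.mem_univ, true_and] at hf ⊢
    refine ⟨⟨fun r => hf.1 r, fun r => hf.2 r⟩, ?_⟩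
    have := ((f (Fin.last m)).1).isLt
    simp only [Fin.coe_castLE]
    omega
  · intro f hf
    funext r
    ext <;> simp
  · intro f hf
    funext r
    ext <;> simp
  · intro f hf
    rfl
end cast

section rec
variable (H : ℕ → ℕ → ℝ)

lemma collapse (k : ℕ) (F : ℕ → ℝ) :
    (∑ a : Fin (k+2) × Fin (k+2),
      if (1 ≤ ((a.2:ℕ)) ∧ ((a.2:ℕ)) ≤ ((a.1:ℕ))) ∧ ((a.1:ℕ) = k+1) then F ((a.2:ℕ)) else 0)
    = ∑ j ∈ Finset.range (k+1), F (j+1) := by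
  rw [Fintype.sum_prod_type]
  rw [Finset.sum_eq_single (Fin.last (k+1))]
  · have hval : ((Fin.last (k+1) : Fin (k+2)) : ℕ) = k + 1 := rfl
    have h1 : ∀ a2 : Fin (k+2),
        ((1 ≤ ((a2:ℕ)) ∧ ((a2:ℕ)) ≤ ((Fin.last (k+1) : Fin (k+2)):ℕ)) ∧
          (((Fin.last (k+1) : Fin (k+2)):ℕ) = k+1)) ↔ 1 ≤ (a2:ℕ) := by
      intro a2
      simp [hval]
      omega
    calc (∑ a2 : Fin (k+2), if (1 ≤ ((a2:ℕ)) ∧ ((a2:ℕ)) ≤ (((Fin.last (k+1) : Fin (k+2))):ℕ)) ∧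
            ((((Fin.last (k+1) : Fin (k+2))):ℕ) = k+1) then F ((a2:ℕ)) else 0)
        = ∑ a2 : Fin (k+2), if 1 ≤ ((a2:ℕ)) then F ((a2:ℕ)) else 0 := by
          refine Finset.sum_congr rfl fun a2 _ => ?_
          rw [if_congr (h1 a2) rfl rfl]
      _ = ∑ i ∈ Finset.range (k+2), if 1 ≤ i then F i else 0 := by
          rw [Fin.sum_univ_eq_sum_range (fun i => if 1 ≤ i then F i else 0)]
      _ = ∑ j ∈ Finset.range (k+1), F (j+1) := by
          rw [Finset.sum_range_succ']
          simp
  · intro a1 _ ha1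
    refine Finset.sum_eq_zero fun a2 _ => ?_
    rw [if_neg]
    rintro ⟨-, h⟩
    exact ha1 (Fin.ext (by simpa using h))
  · simp
end rec

section secondsum
variable (H : ℕ → ℕ → ℝ)

lemma second_sum (k m : ℕ) :
    (∑ f : Fin (m + 1) → Fin (k + 2) × Fin (k + 2),
      if ((∀ r, 1 ≤ ((f r).2 : ℕ) ∧ ((f r).2 : ℕ) ≤ ((f r).1 : ℕ)) ∧
          (∀ r : Fin m, ((f r.castSucc).1 : ℕ) < ((f r.succ).2 : ℕ))) ∧
          ((f (Fin.last m)).1 : ℕ) = k + 1 then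
        ∏ r, H ((f r).1 : ℕ) ((f r).2 : ℕ) else 0)
    = ∑ j ∈ Finset.range (k+1), H (k+1) (j+1) * Pinv H j m := by
  classical
  have hcollapse := collapse k (fun t => H (k+1) t * Pinv H (t-1) m)
  simp only [Nat.add_sub_cancel] at hcollapse
  cases m with
  | zero =>
      rw [← hcollapse]
      refine Fintype.sum_equiv (Equiv.funUnique (Fin 1) (Fin (k+2) × Fin (k+2))) _ _ fun f => ?_
      have hd : (Equiv.funUnique (Fin 1) (Fin (k+2) × Fin (k+2))) f = f 0 := rfl
      rw [hd]
      have hl : Fin.last 0 = 0 := rfl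
      rw [hl]
      by_cases hc : ((1 ≤ ((f 0).2 : ℕ) ∧ ((f 0).2 : ℕ) ≤ ((f 0).1 : ℕ))) ∧ ((f 0).1 : ℕ) = k + 1
      · rw [if_pos ⟨⟨fun r => by rw [Fin.fin_one_eq_zero r]; exact hc.1, fun r => r.elim0⟩, hc.2⟩,
          if_pos hc]
        rw [Fin.prod_univ_one, hc.2]
        show H (k+1) ((f 0).2:ℕ) = H (k+1) ((f 0).2:ℕ) * Pinv H (((f 0).2:ℕ)-1) 0
        rw [Pinv, mul_one]
      · rw [if_neg (fun h => hc ⟨h.1.1 0, h.2⟩), if_neg hc]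
  | succ m' =>
      set β := Fin (k+2) × Fin (k+2) with hβ
      have hkey : ∀ (a : β) (g : Fin (m'+1) → β),
          (((∀ r : Fin (m'+2), 1 ≤ ((Fin.snoc (α := fun _ => β) g a r).2 : ℕ) ∧
              ((Fin.snoc (α := fun _ => β) g a r).2 : ℕ) ≤ ((Fin.snoc (α := fun _ => β) g a r).1 : ℕ)) ∧
            (∀ r : Fin (m'+1), ((Fin.snoc (α := fun _ => β) g a r.castSucc).1 : ℕ)
                < ((Fin.snoc (α := fun _ => β) g a r.succ).2 : ℕ))) ∧
            ((Fin.snoc (α := fun _ => β) g a (Fin.last (m'+1))).1 : ℕ) = k + 1)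
          ↔ (((1 ≤ ((a.2:ℕ)) ∧ ((a.2:ℕ)) ≤ ((a.1:ℕ))) ∧ ((a.1:ℕ) = k+1)) ∧
            (((∀ r : Fin (m'+1), 1 ≤ ((g r).2:ℕ) ∧ ((g r).2:ℕ) ≤ ((g r).1:ℕ)) ∧
              (∀ r : Fin m', ((g r.castSucc).1:ℕ) < ((g r.succ).2:ℕ))) ∧
              ((g (Fin.last m')).1:ℕ) ≤ ((a.2:ℕ)) - 1)) := by
        intro a g
        simp only [Fin.forall_fin_succ', Fin.snoc_castSucc, Fin.snoc_last, Fin.succ_castSucc,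
          Fin.succ_last]
        constructor
        · rintro ⟨⟨⟨hg2, ha2⟩, hch, hlast⟩, hd⟩
          exact ⟨⟨ha2, hd⟩, ⟨⟨hg2, hch⟩, by omega⟩⟩
        · rintro ⟨⟨ha2, hd⟩, ⟨⟨hg2, hch⟩, hlast⟩⟩
          exact ⟨⟨⟨hg2, ha2⟩, hch, by omega⟩, hd⟩
      have hprod : ∀ (a : β) (g : Fin (m'+1) → β),
          (∏ r : Fin (m'+2), H ((Fin.snoc (α := fun _ => β) g a r).1 : ℕ)
              ((Fin.snoc (α := fun _ => β) g a r).2 : ℕ))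
          = (∏ r : Fin (m'+1), H ((g r).1:ℕ) ((g r).2:ℕ)) * H ((a.1:ℕ)) ((a.2:ℕ)) := by
        intro a g
        rw [Fin.prod_univ_castSucc]
        simp only [Fin.snoc_castSucc, Fin.snoc_last]
      rw [← hcollapse, ← Equiv.sum_comp (Fin.snocEquiv (fun _ : Fin (m'+2) => β)),
        Fintype.sum_prod_type]
      refine Finset.sum_congr rfl fun a _ => ?_
      have hsn : ∀ g : Fin (m'+1) → β,
          (Fin.snocEquiv (fun _ : Fin (m'+2) => β)) (a, g) = Fin.snoc (α := fun _ => β) g a :=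
        fun g => rfl
      calc (∑ g : Fin (m'+1) → β,
            if ((∀ r : Fin (m'+2), 1 ≤ (((Fin.snocEquiv (fun _ : Fin (m'+2) => β)) (a, g) r).2 : ℕ) ∧
                (((Fin.snocEquiv (fun _ : Fin (m'+2) => β)) (a, g) r).2 : ℕ)
                  ≤ (((Fin.snocEquiv (fun _ : Fin (m'+2) => β)) (a, g) r).1 : ℕ)) ∧
              (∀ r : Fin (m'+1), (((Fin.snocEquiv (fun _ : Fin (m'+2) => β)) (a, g) r.castSucc).1 : ℕ)
                  < (((Fin.snocEquiv (fun _ : Fin (m'+2) => β)) (a, g) r.succ).2 : ℕ))) ∧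
              (((Fin.snocEquiv (fun _ : Fin (m'+2) => β)) (a, g) (Fin.last (m'+1))).1 : ℕ) = k + 1 then
              ∏ r : Fin (m'+2), H (((Fin.snocEquiv (fun _ : Fin (m'+2) => β)) (a, g) r).1 : ℕ)
                (((Fin.snocEquiv (fun _ : Fin (m'+2) => β)) (a, g) r).2 : ℕ)
            else 0)
          = ∑ g : Fin (m'+1) → β,
            if (((1 ≤ ((a.2:ℕ)) ∧ ((a.2:ℕ)) ≤ ((a.1:ℕ))) ∧ ((a.1:ℕ) = k+1)) ∧
              (((∀ r : Fin (m'+1), 1 ≤ ((g r).2:ℕ) ∧ ((g r).2:ℕ) ≤ ((g r).1:ℕ)) ∧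
                (∀ r : Fin m', ((g r.castSucc).1:ℕ) < ((g r.succ).2:ℕ))) ∧
                ((g (Fin.last m')).1:ℕ) ≤ ((a.2:ℕ)) - 1)) then
              (∏ r : Fin (m'+1), H ((g r).1:ℕ) ((g r).2:ℕ)) * H ((a.1:ℕ)) ((a.2:ℕ))
            else 0 := by
            refine Finset.sum_congr rfl fun g _ => ?_
            rw [hsn g]
            rw [if_congr (hkey a g) (hprod a g) rfl]
        _ = if (1 ≤ ((a.2:ℕ)) ∧ ((a.2:ℕ)) ≤ ((a.1:ℕ))) ∧ ((a.1:ℕ) = k+1) then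
              H (k+1) ((a.2:ℕ)) * Pinv H (((a.2:ℕ)) - 1) (m'+1) else 0 := by
            by_cases hca : (1 ≤ ((a.2:ℕ)) ∧ ((a.2:ℕ)) ≤ ((a.1:ℕ))) ∧ ((a.1:ℕ) = k+1)
            · rw [if_pos hca]
              have : ∀ g : Fin (m'+1) → β, (if (((1 ≤ ((a.2:ℕ)) ∧ ((a.2:ℕ)) ≤ ((a.1:ℕ))) ∧
                  ((a.1:ℕ) = k+1)) ∧
                  (((∀ r : Fin (m'+1), 1 ≤ ((g r).2:ℕ) ∧ ((g r).2:ℕ) ≤ ((g r).1:ℕ)) ∧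
                    (∀ r : Fin m', ((g r.castSucc).1:ℕ) < ((g r.succ).2:ℕ))) ∧
                    ((g (Fin.last m')).1:ℕ) ≤ ((a.2:ℕ)) - 1)) then
                  (∏ r : Fin (m'+1), H ((g r).1:ℕ) ((g r).2:ℕ)) * H ((a.1:ℕ)) ((a.2:ℕ))
                else 0)
                = (if ((∀ r : Fin (m'+1), 1 ≤ ((g r).2:ℕ) ∧ ((g r).2:ℕ) ≤ ((g r).1:ℕ)) ∧
                    (∀ r : Fin m', ((g r.castSucc).1:ℕ) < ((g r.succ).2:ℕ))) ∧
                    ((g (Fin.last m')).1:ℕ) ≤ ((a.2:ℕ)) - 1 then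
                  (∏ r : Fin (m'+1), H ((g r).1:ℕ) ((g r).2:ℕ)) else 0) * H ((a.1:ℕ)) ((a.2:ℕ)) := by
                intro g
                rw [if_congr (and_iff_right hca) rfl rfl, ite_mul, zero_mul]
              rw [Finset.sum_congr rfl fun g _ => this g, ← Finset.sum_mul,
                Pinv_cast H (k+1) (((a.2:ℕ)) - 1) m' (by omega), hca.2, mul_comm]
            · rw [if_neg hca]
              refine Finset.sum_eq_zero fun g _ => ?_
              rw [if_neg (fun h => hca h.1)]

lemma Pinv_rec (k m : ℕ) :
    Pinv H (k+1) (m+1)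
      = Pinv H k (m+1) + ∑ j ∈ Finset.range (k+1), H (k+1) (j+1) * Pinv H j m := by
  classical
  rw [Pinv]
  have hsplit : ∀ f : Fin (m + 1) → Fin (k + 2) × Fin (k + 2),
      (if (∀ r, 1 ≤ ((f r).2 : ℕ) ∧ ((f r).2 : ℕ) ≤ ((f r).1 : ℕ)) ∧
          (∀ r : Fin m, ((f r.castSucc).1 : ℕ) < ((f r.succ).2 : ℕ)) then
        ∏ r, H ((f r).1 : ℕ) ((f r).2 : ℕ) else 0)
      = (if ((∀ r, 1 ≤ ((f r).2 : ℕ) ∧ ((f r).2 : ℕ) ≤ ((f r).1 : ℕ)) ∧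
          (∀ r : Fin m, ((f r.castSucc).1 : ℕ) < ((f r.succ).2 : ℕ))) ∧
          ((f (Fin.last m)).1 : ℕ) ≤ k then
        ∏ r, H ((f r).1 : ℕ) ((f r).2 : ℕ) else 0)
      + (if ((∀ r, 1 ≤ ((f r).2 : ℕ) ∧ ((f r).2 : ℕ) ≤ ((f r).1 : ℕ)) ∧
          (∀ r : Fin m, ((f r.castSucc).1 : ℕ) < ((f r.succ).2 : ℕ))) ∧
          ((f (Fin.last m)).1 : ℕ) = k + 1 then
        ∏ r, H ((f r).1 : ℕ) ((f r).2 : ℕ) else 0) := by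
    intro f
    have hlt : ((f (Fin.last m)).1 : ℕ) < k + 2 := (f (Fin.last m)).1.isLt
    by_cases hC : (∀ r, 1 ≤ ((f r).2 : ℕ) ∧ ((f r).2 : ℕ) ≤ ((f r).1 : ℕ)) ∧
          (∀ r : Fin m, ((f r.castSucc).1 : ℕ) < ((f r.succ).2 : ℕ))
    · by_cases hle : ((f (Fin.last m)).1 : ℕ) ≤ k
      · rw [if_pos hC, if_pos ⟨hC, hle⟩, if_neg (by omega), add_zero]
      · rw [if_pos hC, if_neg (by tauto), if_pos ⟨hC, by omega⟩, zero_add]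
    · rw [if_neg hC, if_neg (by tauto), if_neg (by tauto), add_zero]
  rw [Finset.sum_congr rfl fun f _ => hsplit f, Finset.sum_add_distrib]
  congr 1
  · exact Pinv_cast H (k+1) k m (by omega)
  · exact second_sum H k m

noncomputable def wvec (N m : ℕ) : Fin N → ℝ := fun s => (-1:ℝ)^(s:ℕ) * (m.choose (s:ℕ) : ℝ)

lemma Gmat_mulVec {N : ℕ} (hN : 2 ≤ N) (v : Fin N → ℝ) (i : Fin N) :
    (Gmat N).mulVec v i =
      if (i:ℕ) = 0 then (v i + v ⟨N-1, by omega⟩) / 2 else (v i - v ⟨(i:ℕ)-1, by omega⟩) / 2 := by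
  simp only [Matrix.mulVec, dotProduct, Gmat, Matrix.of_apply]
  by_cases h0 : (i:ℕ) = 0
  · rw [if_pos h0]
    rw [Finset.sum_eq_add_of_mem i ⟨N-1, by omega⟩ (Finset.mem_univ _) (Finset.mem_univ _)
      (by simp only [ne_eq, Fin.ext_iff]; omega) ?_]
    · simp only [Fin.ext_iff]
      split_ifs <;> first | ring1 | (exfalso; omega) | (exfalso; simp_all) | (exfalso; simp_all; omega)
    · intro c _ hc
      have hc1 : (c:ℕ) ≠ (i:ℕ) := fun h => hc.1 (Fin.ext h)
      have hc2 : (c:ℕ) ≠ N - 1 := fun h => hc.2 (Fin.ext h)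
      simp only [Fin.ext_iff]
      split_ifs <;> first | ring1 | (exfalso; omega) | (exfalso; simp_all) | (exfalso; simp_all; omega)
  · rw [if_neg h0]
    rw [Finset.sum_eq_add_of_mem i ⟨(i:ℕ)-1, by omega⟩ (Finset.mem_univ _) (Finset.mem_univ _)
      (by simp only [ne_eq, Fin.ext_iff]; omega) ?_]
    · simp only [Fin.ext_iff]
      split_ifs <;> first | ring1 | (exfalso; omega) | (exfalso; simp_all) | (exfalso; simp_all; omega)
    · intro c _ hc
      have hc1 : (c:ℕ) ≠ (i:ℕ) := fun h => hc.1 (Fin.ext h)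
      have hc2 : (c:ℕ) ≠ (i:ℕ) - 1 := fun h => hc.2 (Fin.ext h)
      simp only [Fin.ext_iff]
      split_ifs <;> first | ring1 | (exfalso; omega) | (exfalso; simp_all) | (exfalso; simp_all; omega)

lemma mulVec_wvec {N : ℕ} (hN : 2 ≤ N) (m : ℕ) (hm : m + 1 ≤ N - 1) :
    (Gmat N).mulVec (wvec N m) = fun i => (1/2 : ℝ) * wvec N (m+1) i := by
  funext i
  rw [Gmat_mulVec hN]
  split_ifs with h0
  · have h1 : wvec N m i = 1 := by simp [wvec, h0]
    have h2 : wvec N m ⟨N-1, by omega⟩ = 0 := by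
      simp [wvec, Nat.choose_eq_zero_of_lt (show m < N - 1 by omega)]
    have h3 : wvec N (m+1) i = 1 := by simp [wvec, h0]
    rw [h1, h2, h3]
    norm_num
  · obtain ⟨t, ht⟩ : ∃ t, (i:ℕ) = t + 1 := ⟨(i:ℕ)-1, by omega⟩
    simp only [wvec]
    rw [ht]
    simp only [Nat.add_sub_cancel]
    rw [Nat.choose_succ_succ m t]
    push_cast
    ring

lemma alt_sum_real (m N : ℕ) (h : m < N) :
    ∑ s ∈ Finset.range N, (-1:ℝ)^s * (m.choose s : ℝ) = if m = 0 then 1 else 0 := by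
  rw [← Finset.sum_subset (Finset.range_subset_range.mpr (show m+1 ≤ N by omega))
    (fun s hs hns => by
      rw [Nat.choose_eq_zero_of_lt (by simp at hs hns; omega)]
      norm_num)]
  have h1 := congrArg (fun z : ℤ => (z : ℝ)) (Int.alternating_sum_range_choose (n := m))
  push_cast at h1
  rw [h1]

lemma vand_nat (m n N : ℕ) (hn : n < N) :
    ∑ s ∈ Finset.range N, m.choose s * n.choose s = (m+n).choose m := by
  rw [← Finset.sum_subset (Finset.range_subset_range.mpr (show n+1 ≤ N by omega))
    (fun s hs hns => by
      rw [Nat.choose_eq_zero_of_lt (show n < s by simp at hs hns; omega), mul_zero])]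
  rw [Nat.choose_symm_add, Nat.add_choose_eq m n n,
    Finset.Nat.sum_antidiagonal_eq_sum_range_succ_mk]
  refine Finset.sum_congr rfl fun s hs => ?_
  rw [Nat.choose_symm (by simp at hs; omega)]

open Matrix in
/-- **Explicit form of the worst-case Gram matrix (Lemma 6.2).**
With `T = I − 2G`, `y₀ = −(1/√N)(e₁+⋯+e_N)`, H-matrix algorithm iterates `y₀,…,y_{N−1}`
and `g_i = G y_{i−1}` (`i = 1,…,N`), the Gram matrix of `(g₁,…,g_N, y₀)` satisfies:
(a) `⟨g_i, g_j⟩ = (1/N)·Σ_{m=0}^{i−1} Σ_{n=0}^{j−1} (−1)^{m+n}·C(m+n,m)·P(i−1,m;H)·P(j−1,n;H)`;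
(b) `⟨g_i, y₀⟩ = 1/N`; (c) `‖y₀‖² = 1`. -/
theorem worst_case_gram_matrix_entries (N : ℕ) (hN : 2 ≤ N) (H : ℕ → ℕ → ℝ)
    (T : (Fin N → ℝ) → (Fin N → ℝ)) (hT : ∀ v, T v = v - (2 : ℝ) • (Gmat N).mulVec v)
    (y0 : Fin N → ℝ) (hy0 : y0 = fun _ => -(1 / Real.sqrt N))
    (y : ℕ → Fin N → ℝ) (hyinit : y 0 = y0)
    (hrec : ∀ k, k < N - 1 →
      y (k + 1) = y k - ∑ j ∈ Finset.range (k + 1), H (k + 1) (j + 1) • (y j - T (y j)))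
    (g : ℕ → Fin N → ℝ) (hg : ∀ i, 1 ≤ i → i ≤ N → g i = (Gmat N).mulVec (y (i - 1))) :
    (∀ i j, 1 ≤ i → i ≤ N → 1 ≤ j → j ≤ N →
      g i ⬝ᵥ g j = 1 / (N : ℝ) * ∑ m ∈ Finset.range i, ∑ n ∈ Finset.range j,
        (-1 : ℝ) ^ (m + n) * (Nat.choose (m + n) m : ℝ) * Pinv H (i - 1) m * Pinv H (j - 1) n) ∧
    (∀ i, 1 ≤ i → i ≤ N → g i ⬝ᵥ y0 = 1 / (N : ℝ)) ∧
    y0 ⬝ᵥ y0 = 1 := by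
  classical
  set c : ℝ := -(1 / Real.sqrt N) with hc
  have hN0 : (0:ℝ) < (N:ℝ) := by exact_mod_cast (show 0 < N by omega)
  have hsq : Real.sqrt N * Real.sqrt N = (N:ℝ) := Real.mul_self_sqrt (le_of_lt hN0)
  have hsqne : Real.sqrt N ≠ 0 := by
    intro h
    rw [h, mul_zero] at hsq
    exact absurd hsq.symm (ne_of_gt hN0)
  have hcc : c * c = 1 / (N:ℝ) := by
    rw [hc]
    field_simp
    rw [Real.sq_sqrt hN0.le]
  -- linearity helper
  have hlinG : ∀ (s : Finset ℕ) (coef : ℕ → ℝ) (vv : ℕ → Fin N → ℝ),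
      (Gmat N).mulVec (fun i => ∑ m ∈ s, coef m * vv m i)
      = fun i => ∑ m ∈ s, coef m * (Gmat N).mulVec (vv m) i := by
    intro s coef vv
    funext i
    show ∑ t, Gmat N i t * ∑ m ∈ s, coef m * vv m t = _
    calc (∑ t, Gmat N i t * ∑ m ∈ s, coef m * vv m t)
        = ∑ t, ∑ m ∈ s, Gmat N i t * (coef m * vv m t) := by
          refine Finset.sum_congr rfl fun t _ => Finset.mul_sum _ _ _
      _ = ∑ m ∈ s, ∑ t, Gmat N i t * (coef m * vv m t) := Finset.sum_comm
      _ = ∑ m ∈ s, coef m * ∑ t, Gmat N i t * vv m t := by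
          refine Finset.sum_congr rfl fun m _ => ?_
          rw [Finset.mul_sum]
          exact Finset.sum_congr rfl fun t _ => by ring
  -- the key induction
  have key : ∀ k, k ≤ N - 1 → (Gmat N).mulVec (y k)
      = fun i => ∑ m ∈ Finset.range (k+1), (c * ((-1:ℝ)^m * Pinv H k m)) * wvec N m i := by
    intro k
    induction k using Nat.strong_induction_on with
    | _ k ih =>
      intro hk
      match k with
      | 0 =>
        rw [hyinit, hy0]
        funext i
        rw [Gmat_mulVec hN]
        rw [Finset.sum_range_one]
        have hp0 : Pinv H 0 0 = 1 := rfl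
        split_ifs with h0
        · simp only [wvec, h0, pow_zero, Nat.choose_self, Nat.cast_one, hp0]
          ring
        · simp only [wvec, hp0, Nat.choose_eq_zero_of_lt (show 0 < (i:ℕ) by omega)]
          push_cast
          ring
      | k+1 =>
        have hyk := hrec k (by omega)
        have hTy : ∀ j, y j - T (y j) = (2:ℝ) • (Gmat N).mulVec (y j) := by
          intro j
          rw [hT (y j), sub_sub_cancel]
        have hy1 : y (k+1) = y k
            - (fun i => ∑ j ∈ Finset.range (k+1),
                (H (k+1) (j+1) * 2) * (Gmat N).mulVec (y j) i) := by
          rw [hyk]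
          congr 1
          funext i
          rw [Finset.sum_apply]
          refine Finset.sum_congr rfl fun j _ => ?_
          rw [hTy j]
          simp [mul_assoc]
        have hGyj : ∀ j, j < k + 1 → (Gmat N).mulVec ((Gmat N).mulVec (y j))
            = fun i => ∑ m ∈ Finset.range (j+1),
                (c * ((-1:ℝ)^m * Pinv H j m)) * ((1/2) * wvec N (m+1) i) := by
          intro j hj
          rw [ih j hj (by omega), hlinG]
          funext i
          refine Finset.sum_congr rfl fun m hm => ?_
          rw [mulVec_wvec hN m (by simp at hm; omega)]
        rw [hy1, Matrix.mulVec_sub, ih k (by omega) (by omega),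
          hlinG (Finset.range (k+1)) (fun j => H (k+1) (j+1) * 2) (fun j => (Gmat N).mulVec (y j))]
        funext i
        rw [Pi.sub_apply]
        -- rewrite the inner double sum
        have hinner : ∀ j ∈ Finset.range (k+1),
            (H (k+1) (j+1) * 2) * (Gmat N).mulVec ((Gmat N).mulVec (y j)) i
            = ∑ m ∈ Finset.range (k+1),
                H (k+1) (j+1) * ((c * ((-1:ℝ)^m * Pinv H j m)) * wvec N (m+1) i) := by
          intro j hj
          simp only [Finset.mem_range] at hj
          rw [hGyj j hj]
          rw [← Finset.sum_subset (Finset.range_subset_range.mpr (show j+1 ≤ k+1 by omega))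
            (fun m _ hm => by
              rw [Pinv_eq_zero H (show j < m by simp at hm ⊢; omega)]
              ring)]
          rw [Finset.mul_sum]
          refine Finset.sum_congr rfl fun m _ => by ring
        rw [Finset.sum_congr rfl hinner, Finset.sum_comm]
        -- now pure arithmetic with sums
        have hB : ∀ m, (∑ j ∈ Finset.range (k+1),
            H (k+1) (j+1) * ((c * ((-1:ℝ)^m * Pinv H j m)) * wvec N (m+1) i))
            = (c * ((-1:ℝ)^m * (∑ j ∈ Finset.range (k+1), H (k+1) (j+1) * Pinv H j m)))
                * wvec N (m+1) i := by
          intro m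
          trans (∑ j ∈ Finset.range (k+1), H (k + 1) (j + 1) * Pinv H j m)
              * (c * (-1:ℝ)^m * wvec N (m+1) i)
          · rw [Finset.sum_mul]
            exact Finset.sum_congr rfl fun j _ => by ring
          · ring
        rw [Finset.sum_congr rfl (fun m _ => hB m)]
        have hext : (∑ m ∈ Finset.range (k+1), (c * ((-1:ℝ)^m * Pinv H k m)) * wvec N m i)
            = ∑ m ∈ Finset.range (k+2), (c * ((-1:ℝ)^m * Pinv H k m)) * wvec N m i := by
          refine Finset.sum_subset (Finset.range_subset_range.mpr (by omega)) fun m _ hm => ?_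
          rw [Pinv_eq_zero H (show k < m by simp at hm ⊢; omega)]
          ring
        rw [hext,
          Finset.sum_range_succ' (fun m => (c * ((-1:ℝ)^m * Pinv H k m)) * wvec N m i) (k+1),
          Finset.sum_range_succ' (fun m => (c * ((-1:ℝ)^m * Pinv H (k+1) m)) * wvec N m i) (k+1),
          add_sub_right_comm, ← Finset.sum_sub_distrib]
        congr 1
        refine Finset.sum_congr rfl fun m _ => ?_
        have hrw : (c * ((-1:ℝ)^(m+1) * Pinv H k (m+1))) * wvec N (m+1) i
            - (c * ((-1:ℝ)^m * (∑ j ∈ Finset.range (k+1), H (k+1) (j+1) * Pinv H j m)))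
                * wvec N (m+1) i
            = (c * ((-1:ℝ)^(m+1) * (Pinv H k (m+1)
                + ∑ j ∈ Finset.range (k+1), H (k+1) (j+1) * Pinv H j m))) * wvec N (m+1) i := by
          ring
        rw [hrw, ← Pinv_rec]
  -- dot products of wvec
  have hwdot : ∀ m n : ℕ, n < N →
      (∑ s : Fin N, wvec N m s * wvec N n s) = (((m+n).choose m : ℕ) : ℝ) := by
    intro m n hn
    have h1 : ∀ s : Fin N, wvec N m s * wvec N n s
        = ((m.choose (s:ℕ) : ℕ) : ℝ) * ((n.choose (s:ℕ) : ℕ) : ℝ) := by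
      intro s
      simp only [wvec]
      have : ((-1:ℝ)^(s:ℕ)) * ((-1:ℝ)^(s:ℕ)) = 1 := by
        rw [← mul_pow]
        norm_num
      calc (-1:ℝ)^(s:ℕ) * (m.choose (s:ℕ) : ℝ) * ((-1:ℝ)^(s:ℕ) * (n.choose (s:ℕ) : ℝ))
          = ((-1:ℝ)^(s:ℕ) * (-1:ℝ)^(s:ℕ)) * ((m.choose (s:ℕ) : ℝ) * (n.choose (s:ℕ) : ℝ)) := by
            ring
        _ = (m.choose (s:ℕ) : ℝ) * (n.choose (s:ℕ) : ℝ) := by rw [this, one_mul]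
    rw [Finset.sum_congr rfl fun s _ => h1 s,
      Fin.sum_univ_eq_sum_range (fun s => ((m.choose s : ℕ) : ℝ) * ((n.choose s : ℕ) : ℝ))]
    exact_mod_cast congrArg (fun z : ℕ => (z:ℝ)) (vand_nat m n N hn)
  -- sum of wvec entries
  have hwsum : ∀ m : ℕ, m < N → (∑ s : Fin N, wvec N m s) = if m = 0 then 1 else 0 := by
    intro m hm
    simp only [wvec]
    rw [Fin.sum_univ_eq_sum_range (fun s => (-1:ℝ)^s * (m.choose s : ℝ))]
    exact alt_sum_real m N hm
  refine ⟨?_, ?_, ?_⟩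
  · -- part (a)
    intro i j h1i h2i h1j h2j
    have hi1 : i - 1 + 1 = i := by omega
    have hj1 : j - 1 + 1 = j := by omega
    rw [hg i h1i h2i, hg j h1j h2j, key (i-1) (by omega), key (j-1) (by omega), hi1, hj1]
    rw [dotProduct]
    calc (∑ s : Fin N, (∑ m ∈ Finset.range i, (c * ((-1:ℝ)^m * Pinv H (i-1) m)) * wvec N m s)
            * (∑ n ∈ Finset.range j, (c * ((-1:ℝ)^n * Pinv H (j-1) n)) * wvec N n s))
        = ∑ s : Fin N, ∑ m ∈ Finset.range i, ∑ n ∈ Finset.range j,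
            ((c * ((-1:ℝ)^m * Pinv H (i-1) m)) * wvec N m s)
              * ((c * ((-1:ℝ)^n * Pinv H (j-1) n)) * wvec N n s) := by
          refine Finset.sum_congr rfl fun s _ => ?_
          rw [Finset.sum_mul_sum]
      _ = ∑ m ∈ Finset.range i, ∑ s : Fin N, ∑ n ∈ Finset.range j,
            ((c * ((-1:ℝ)^m * Pinv H (i-1) m)) * wvec N m s)
              * ((c * ((-1:ℝ)^n * Pinv H (j-1) n)) * wvec N n s) := Finset.sum_comm
      _ = ∑ m ∈ Finset.range i, ∑ n ∈ Finset.range j, ∑ s : Fin N,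
            ((c * ((-1:ℝ)^m * Pinv H (i-1) m)) * wvec N m s)
              * ((c * ((-1:ℝ)^n * Pinv H (j-1) n)) * wvec N n s) := by
          exact Finset.sum_congr rfl fun m _ => Finset.sum_comm
      _ = ∑ m ∈ Finset.range i, ∑ n ∈ Finset.range j,
            (c * c) * (((-1:ℝ)^m * Pinv H (i-1) m) * ((-1:ℝ)^n * Pinv H (j-1) n))
              * (∑ s : Fin N, wvec N m s * wvec N n s) := by
          refine Finset.sum_congr rfl fun m _ => Finset.sum_congr rfl fun n _ => ?_
          rw [Finset.mul_sum]
          exact Finset.sum_congr rfl fun s _ => by ring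
      _ = 1 / (N:ℝ) * ∑ m ∈ Finset.range i, ∑ n ∈ Finset.range j,
            (-1 : ℝ) ^ (m + n) * ((m + n).choose m : ℝ) * Pinv H (i - 1) m * Pinv H (j - 1) n := by
          rw [Finset.mul_sum]
          refine Finset.sum_congr rfl fun m hm => ?_
          rw [Finset.mul_sum]
          refine Finset.sum_congr rfl fun n hn => ?_
          rw [hwdot m n (by simp at hn; omega), hcc, pow_add]
          ring
  · -- part (b)
    intro i h1i h2i
    have hi1 : i - 1 + 1 = i := by omega
    rw [hg i h1i h2i, key (i-1) (by omega), hi1, hy0, dotProduct]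
    calc (∑ s : Fin N, (∑ m ∈ Finset.range i, (c * ((-1:ℝ)^m * Pinv H (i-1) m)) * wvec N m s) * c)
        = ∑ s : Fin N, ∑ m ∈ Finset.range i,
            ((c * ((-1:ℝ)^m * Pinv H (i-1) m)) * wvec N m s) * c := by
          refine Finset.sum_congr rfl fun s _ => Finset.sum_mul _ _ _
      _ = ∑ m ∈ Finset.range i, ∑ s : Fin N,
            ((c * ((-1:ℝ)^m * Pinv H (i-1) m)) * wvec N m s) * c := Finset.sum_comm
      _ = ∑ m ∈ Finset.range i, (c * ((-1:ℝ)^m * Pinv H (i-1) m)) * c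
            * (∑ s : Fin N, wvec N m s) := by
          refine Finset.sum_congr rfl fun m _ => ?_
          rw [Finset.mul_sum]
          exact Finset.sum_congr rfl fun s _ => by ring
      _ = 1 / (N:ℝ) := by
          rw [Finset.sum_eq_single_of_mem 0 (Finset.mem_range.mpr (by omega))]
          · have hp : Pinv H (i-1) 0 = 1 := rfl
            rw [hwsum 0 (by omega), if_pos rfl, hp]
            rw [← hcc]
            ring
          · intro m hmem hm
            rw [hwsum m (by simp at hmem; omega), if_neg hm, mul_zero]
  · -- part (c)
    rw [hy0, dotProduct]
    rw [Finset.sum_const, Finset.card_univ, Fintype.card_fin, nsmul_eq_mul]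
    rw [hcc]
    field_simp
end secondsum
end

section
/- Let (W, ⟨·,·⟩) be a real inner product space, let u₁,…,u_p ∈ W and v₁, v₂ ∈ W, and let L : ℝ^{p+2} → W be the linear map L(α₁,…,α_p,β₁,β₂) = α₁u₁ + ⋯ + α_p u_p + β₁v₁ + β₂v₂. Suppose ker L is one-dimensional and spanned by some (a₁,…,a_p,b₁,b₂) with b₁ > 0 and b₂ > 0. Then there exists w ∈ W with ⟨w,v₁⟩ > 0, ⟨w,v₂⟩ > 0, and ⟨w,u_i⟩ ≥ 0 for all i = 1,…,p, if and only if a_j < 0 for some j ∈ {1,…,p}. Moreover, in that case, for any j with a_j < 0 one can choose such a w additionally satisfying ⟨w,u_i⟩ = 0 for all i ≠ j and ⟨w,u_j⟩ > 0. -/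
open scoped RealInnerProductSpace

section Aux

variable {W : Type*} [NormedAddCommGroup W] [InnerProductSpace ℝ W]

set_option maxHeartbeats 1000000 in
/-- Auxiliary: construction of the separating vector for a fixed `j` with `a j < 0`. -/
lemma lat_key (p : ℕ) (u : Fin p → W) (v1 v2 : W) (a : Fin p → ℝ) (b1 b2 : ℝ)
    (hb1 : 0 < b1) (hb2 : 0 < b2)
    (hker : ∑ i, a i • u i + b1 • v1 + b2 • v2 = 0)
    (hspan : ∀ (α : Fin p → ℝ) (β1 β2 : ℝ),
      ∑ i, α i • u i + β1 • v1 + β2 • v2 = 0 →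
      ∃ c : ℝ, (∀ i, α i = c * a i) ∧ β1 = c * b1 ∧ β2 = c * b2)
    (j : Fin p) (hj : a j < 0) :
    ∃ w : W, 0 < ⟪w, v1⟫ ∧ 0 < ⟪w, v2⟫ ∧ (∀ i, i ≠ j → ⟪w, u i⟫ = 0) ∧ 0 < ⟪w, u j⟫ := by
  classical
  set g : {i : Fin p // i ≠ j} → W := fun i => u i with hg
  set K : Submodule ℝ W := Submodule.span ℝ (Set.range g) with hK
  haveI : FiniteDimensional ℝ K := FiniteDimensional.span_of_finite ℝ (Set.finite_range g)
  have huK : ∀ i : Fin p, i ≠ j → u i ∈ K := fun i hi =>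
    Submodule.subset_span ⟨⟨i, hi⟩, rfl⟩
  set P : W → W := fun x => (K.orthogonalProjectionOnto x : W) with hP
  have hPK : ∀ x, P x ∈ K := fun x => (K.orthogonalProjectionOnto x).2
  set z : W := u j - P (u j) with hz
  set y1 : W := v1 - P v1 with hy1
  set y2 : W := v2 - P v2 with hy2
  have hzo : z ∈ Kᗮ := K.sub_starProjection_mem_orthogonal _
  have hy1o : y1 ∈ Kᗮ := K.sub_starProjection_mem_orthogonal _
  have hy2o : y2 ∈ Kᗮ := K.sub_starProjection_mem_orthogonal _
  -- the key linear relation in `Kᗮ`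
  have hsum : ∑ i, a i • u i = a j • u j + ∑ i ∈ Finset.univ.erase j, a i • u i := by
    rw [← Finset.add_sum_erase _ _ (Finset.mem_univ j)]
  have hrel : a j • z + b1 • y1 + b2 • y2 = 0 := by
    set m : W := a j • z + b1 • y1 + b2 • y2 with hm
    have hmo : m ∈ Kᗮ := by
      exact Submodule.add_mem _ (Submodule.add_mem _ (Submodule.smul_mem _ _ hzo)
        (Submodule.smul_mem _ _ hy1o)) (Submodule.smul_mem _ _ hy2o)
    have hmK : m ∈ K := by
      have : m = -(∑ i ∈ Finset.univ.erase j, a i • u i + a j • P (u j)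
          + b1 • P v1 + b2 • P v2) := by
        have := hker
        rw [hsum] at this
        simp only [hm, hz, hy1, hy2, smul_sub]
        have h0 : a j • u j + ∑ i ∈ Finset.univ.erase j, a i • u i + b1 • v1 + b2 • v2 = 0 :=
          this
        abel_nf
        abel_nf at h0
        linear_combination (norm := abel) h0
      rw [this]
      refine Submodule.neg_mem _ (Submodule.add_mem _ (Submodule.add_mem _ (Submodule.add_mem _
        ?_ (Submodule.smul_mem _ _ (hPK _))) (Submodule.smul_mem _ _ (hPK _)))
        (Submodule.smul_mem _ _ (hPK _)))
      exact Submodule.sum_mem _ fun i hi => Submodule.smul_mem _ _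
        (huK i (Finset.ne_of_mem_erase hi))
    have : ⟪m, m⟫ = 0 := (Submodule.mem_orthogonal K m).1 hmo m hmK
    exact inner_self_eq_zero.1 this
  -- independence of y1, y2
  have hindep : ∀ s t : ℝ, s • y1 + t • y2 = 0 → s = 0 ∧ t = 0 := by
    intro s t hst
    have hKmem : s • v1 + t • v2 ∈ K := by
      have : s • v1 + t • v2 = s • P v1 + t • P v2 := by
        have : s • (v1 - P v1) + t • (v2 - P v2) = 0 := hst
        simp only [smul_sub] at this
        linear_combination (norm := abel) this
      rw [this]
      exact Submodule.add_mem _ (Submodule.smul_mem _ _ (hPK _))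
        (Submodule.smul_mem _ _ (hPK _))
    obtain ⟨c, hc⟩ := (Submodule.mem_span_range_iff_exists_fun ℝ).mp hKmem
    -- turn the finsupp combination into a function on Fin p
    set α : Fin p → ℝ := fun i => if h : i = j then 0 else -(c ⟨i, h⟩) with hα
    have hαsum : ∑ i, α i • u i = -(s • v1 + t • v2) := by
      have h1 : ∑ i, α i • u i = ∑ i : {i : Fin p // i ≠ j}, α i • u i := by
        rw [← Finset.sum_subtype (Finset.univ.erase j)
          (fun i => by simp [Finset.mem_erase]) (fun i => α i • u i)]
        rw [← Finset.add_sum_erase _ (fun i => α i • u i) (Finset.mem_univ j)]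
        simp [hα]
      rw [h1]
      have h2 : ∀ i : {i : Fin p // i ≠ j}, α i • u i = -(c i • g i) := by
        intro i
        simp only [hα, dif_neg i.2, hg, neg_smul]
      rw [Finset.sum_congr rfl fun i _ => h2 i, Finset.sum_neg_distrib]
      rw [hc]
    obtain ⟨c', hc1, hc2, hc3⟩ := hspan α s t (by rw [hαsum]; abel)
    have hαj : α j = 0 := by simp [hα]
    have hc'0 : c' = 0 := by
      have := hc1 j
      rw [hαj] at this
      rcases mul_eq_zero.1 this.symm with h | h
      · exact h
      · exact absurd h (ne_of_lt hj)
    constructor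
    · rw [hc2, hc'0, zero_mul]
    · rw [hc3, hc'0, zero_mul]
  have hy1ne : y1 ≠ 0 := by
    intro h
    have := hindep 1 0 (by rw [h]; simp)
    exact one_ne_zero this.1
  have hy2ne : y2 ≠ 0 := by
    intro h
    have := hindep 0 1 (by rw [h]; simp)
    exact one_ne_zero this.2
  -- strict Cauchy–Schwarz
  have hcs1 : ⟪y1, y2⟫ < ‖y1‖ * ‖y2‖ := by
    rw [inner_lt_norm_mul_iff_real]
    intro h
    have := hindep ‖y2‖ (-‖y1‖) (by rw [neg_smul, h]; abel)
    exact hy2ne (norm_eq_zero.1 this.1)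
  have hcs2 : -⟪y1, y2⟫ < ‖y1‖ * ‖y2‖ := by
    have h := inner_lt_norm_mul_iff_real (x := y1) (y := -y2)
    rw [inner_neg_right, norm_neg] at h
    have h' : -⟪y1, y2⟫ < ‖y1‖ * ‖y2‖ := by
      rw [h]
      intro heq
      have := hindep ‖y2‖ ‖y1‖ (by rw [smul_neg] at heq; linear_combination (norm := abel) heq)
      exact hy2ne (norm_eq_zero.1 this.1)
    exact h'
  set A : ℝ := ⟪y1, y1⟫ with hA
  set B : ℝ := ⟪y2, y2⟫ with hB
  set C : ℝ := ⟪y1, y2⟫ with hC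
  have hAn : A = ‖y1‖ * ‖y1‖ := real_inner_self_eq_norm_mul_norm y1
  have hBn : B = ‖y2‖ * ‖y2‖ := real_inner_self_eq_norm_mul_norm y2
  have hdet : 0 < A * B - C * C := by
    have h1 : 0 ≤ ‖y1‖ := norm_nonneg _
    have h2 : 0 ≤ ‖y2‖ := norm_nonneg _
    nlinarith [hcs1, hcs2]
  set w : W := (B - C) • y1 + (A - C) • y2 with hw
  have hwo : w ∈ Kᗮ := Submodule.add_mem _ (Submodule.smul_mem _ _ hy1o)
    (Submodule.smul_mem _ _ hy2o)
  have hwy1 : ⟪w, y1⟫ = A * B - C * C := by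
    simp only [hw, inner_add_left, real_inner_smul_left, hA, hB, hC]
    rw [real_inner_comm y2 y1]
    ring
  have hwy2 : ⟪w, y2⟫ = A * B - C * C := by
    simp only [hw, inner_add_left, real_inner_smul_left, hA, hB, hC]
    ring
  have hwv1 : ⟪w, v1⟫ = ⟪w, y1⟫ := by
    have : ⟪w, v1 - y1⟫ = 0 := by
      apply (Submodule.mem_orthogonal' K w).1 hwo
      have : v1 - y1 = P v1 := by rw [hy1]; abel
      rw [this]; exact hPK _
    rw [inner_sub_right] at this
    linarith
  have hwv2 : ⟪w, v2⟫ = ⟪w, y2⟫ := by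
    have : ⟪w, v2 - y2⟫ = 0 := by
      apply (Submodule.mem_orthogonal' K w).1 hwo
      have : v2 - y2 = P v2 := by rw [hy2]; abel
      rw [this]; exact hPK _
    rw [inner_sub_right] at this
    linarith
  have hwuj : ⟪w, u j⟫ = ⟪w, z⟫ := by
    have : ⟪w, u j - z⟫ = 0 := by
      apply (Submodule.mem_orthogonal' K w).1 hwo
      have : u j - z = P (u j) := by rw [hz]; abel
      rw [this]; exact hPK _
    rw [inner_sub_right] at this
    linarith
  have hwz : 0 < ⟪w, z⟫ := by
    have h0 : ⟪w, a j • z + b1 • y1 + b2 • y2⟫ = 0 := by rw [hrel, inner_zero_right]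
    rw [inner_add_right, inner_add_right, real_inner_smul_right, real_inner_smul_right,
      real_inner_smul_right, hwy1, hwy2] at h0
    nlinarith [hdet, hb1, hb2, hj]
  refine ⟨w, ?_, ?_, ?_, ?_⟩
  · rw [hwv1, hwy1]; exact hdet
  · rw [hwv2, hwy2]; exact hdet
  · intro i hi
    exact (Submodule.mem_orthogonal' K w).1 hwo (u i) (huK i hi)
  · rw [hwuj]; exact hwz

end Aux

/-- **Linear–algebraic separation lemma (Lemma 6.5).**
Let `W` be a real inner product space, `u₁,…,u_p, v₁, v₂ ∈ W`, and suppose the kernel of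
`L(α,β₁,β₂) = Σ αᵢuᵢ + β₁v₁ + β₂v₂` is one-dimensional and spanned by `(a,b₁,b₂)` with
`b₁, b₂ > 0`. Then there exists `w` with `⟨w,v₁⟩ > 0`, `⟨w,v₂⟩ > 0` and `⟨w,uᵢ⟩ ≥ 0` for all
`i` iff `a_j < 0` for some `j`; moreover in that case, for any such `j`, `w` can be chosen
with `⟨w,uᵢ⟩ = 0` for `i ≠ j` and `⟨w,u_j⟩ > 0`. -/
theorem linear_algebra_trick {W : Type*} [NormedAddCommGroup W] [InnerProductSpace ℝ W]
    (p : ℕ) (u : Fin p → W) (v1 v2 : W) (a : Fin p → ℝ) (b1 b2 : ℝ)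
    (hb1 : 0 < b1) (hb2 : 0 < b2)
    (hker : ∑ i, a i • u i + b1 • v1 + b2 • v2 = 0)
    (hspan : ∀ (α : Fin p → ℝ) (β1 β2 : ℝ),
      ∑ i, α i • u i + β1 • v1 + β2 • v2 = 0 →
      ∃ c : ℝ, (∀ i, α i = c * a i) ∧ β1 = c * b1 ∧ β2 = c * b2) :
    ((∃ w : W, 0 < ⟪w, v1⟫ ∧ 0 < ⟪w, v2⟫ ∧ ∀ i, 0 ≤ ⟪w, u i⟫) ↔ ∃ j, a j < 0) ∧
    (∀ j, a j < 0 →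
      ∃ w : W, 0 < ⟪w, v1⟫ ∧ 0 < ⟪w, v2⟫ ∧ (∀ i, i ≠ j → ⟪w, u i⟫ = 0) ∧ 0 < ⟪w, u j⟫) := by
  have hkey := lat_key p u v1 v2 a b1 b2 hb1 hb2 hker hspan
  constructor
  · constructor
    · rintro ⟨w, hw1, hw2, hw3⟩
      by_contra h
      push_neg at h
      have h0 : ⟪w, ∑ i, a i • u i + b1 • v1 + b2 • v2⟫ = 0 := by
        rw [hker, inner_zero_right]
      rw [inner_add_right, inner_add_right, inner_sum, real_inner_smul_right,
        real_inner_smul_right] at h0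
      simp only [real_inner_smul_right] at h0
      have hsum : 0 ≤ ∑ i, a i * ⟪w, u i⟫ :=
        Finset.sum_nonneg fun i _ => mul_nonneg (h i) (hw3 i)
      nlinarith [mul_pos hb1 hw1, mul_pos hb2 hw2]
    · rintro ⟨j, hj⟩
      obtain ⟨w, hw1, hw2, hw3, hw4⟩ := hkey j hj
      exact ⟨w, hw1, hw2, fun i => by
        by_cases h : i = j
        · rw [h]; exact le_of_lt hw4
        · rw [hw3 i h]⟩
  · exact hkey
end

section
/- Let N ≥ 3, let H be an H-matrix all of whose diagonal entries are nonzero (h_{i,i} ≠ 0 for i = 1,…,N−1), and fix j ∈ {1,…,N−2}. Then λ*_{k,j}(H) = 0 for all k = j+2,…,N if and only if Q(N−1,k,j;H) = C(N−j−1,k−1)·Q(N−1,N−j,j;H) for all k = 1,…,N−j−1. -/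
open Finset

private lemma icc_shift (n : ℕ) (g : ℕ → ℝ) :
    ∑ l ∈ Finset.Icc 1 (n+1), g l = ∑ i ∈ Finset.range (n+1), g (i+1) := by
  apply Finset.sum_nbij' (fun l => l - 1) (fun i => i + 1) <;>
    (intros; simp_all [Finset.mem_Icc, Finset.mem_range]) <;> omega

private lemma fd_step (f : ℕ → ℝ) (n : ℕ) :
    ∑ i ∈ range (n+2), (-1:ℝ)^i * ((n+1).choose i) * f i
    = ∑ i ∈ range (n+1), (-1:ℝ)^i * (n.choose i) * (f i - f (i+1)) := by
  have hsplit := Finset.sum_range_succ' (fun i => (-1:ℝ)^i * ((n+1).choose i) * f i) (n+1)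
  have hpas : ∀ s ∈ range (n+1), (-1:ℝ)^(s+1) * ((n+1).choose (s+1)) * f (s+1)
      = (-1:ℝ)^(s+1) * (n.choose s) * f (s+1) + (-1:ℝ)^(s+1) * (n.choose (s+1)) * f (s+1) := by
    intro s _
    rw [Nat.choose_succ_succ]
    push_cast
    ring
  have hB := Finset.sum_range_succ' (fun i => (-1:ℝ)^i * (n.choose i) * f i) (n+1)
  have hB2 := Finset.sum_range_succ (fun i => (-1:ℝ)^i * (n.choose i) * f i) (n+1)
  have hz : ((-1:ℝ)^(n+1) * (n.choose (n+1)) * f (n+1)) = 0 := by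
    simp [Nat.choose_eq_zero_of_lt (by omega : n < n+1)]
  rw [hsplit, Finset.sum_congr rfl hpas, Finset.sum_add_distrib]
  have hS : ∑ s ∈ range (n+1), (-1:ℝ)^(s+1) * (n.choose (s+1)) * f (s+1)
        + (-1:ℝ)^0 * ((n+1).choose 0) * f 0
      = ∑ i ∈ range (n+1), (-1:ℝ)^i * (n.choose i) * f i := by
    have : ((-1:ℝ)^0 * ((n+1).choose 0) * f 0) = ((-1:ℝ)^0 * (n.choose 0) * f 0) := by simp
    rw [this, ← hB, hB2, hz, add_zero]
  have hRHS : ∑ i ∈ range (n+1), (-1:ℝ)^i * (n.choose i) * (f i - f (i+1))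
      = ∑ i ∈ range (n+1), (-1:ℝ)^i * (n.choose i) * f i
        + ∑ s ∈ range (n+1), (-1:ℝ)^(s+1) * (n.choose s) * f (s+1) := by
    rw [← Finset.sum_add_distrib]
    apply Finset.sum_congr rfl
    intro i _
    ring
  rw [hRHS, ← hS]
  ring

/-- L1: alternating binomial sum against a lower-degree binomial polynomial vanishes. -/
private lemma L1 : ∀ (d n a : ℕ), d < n →
    ∑ i ∈ range (n+1), (-1:ℝ)^i * (n.choose i) * ((i+a).choose d) = 0 := by
  intro d
  induction d with
  | zero =>
    intro n a hn
    simp only [Nat.choose_zero_right, Nat.cast_one, mul_one]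
    have := Int.alternating_sum_range_choose_of_ne (by omega : n ≠ 0)
    have h2 : ((∑ i ∈ range (n + 1), (-1:ℤ) ^ i * ↑(n.choose i) : ℤ) : ℝ) = 0 := by
      rw [this]; simp
    push_cast at h2
    convert h2 using 2
  | succ d ih =>
    intro n a hn
    obtain ⟨n', rfl⟩ : ∃ n', n = n' + 1 := ⟨n - 1, by omega⟩
    rw [fd_step (fun i => ((i+a).choose (d+1) : ℝ)) n']
    have : ∀ i ∈ range (n'+1),
        (-1:ℝ)^i * (n'.choose i) * (((i+a).choose (d+1) : ℝ) - ((i+1+a).choose (d+1) : ℝ))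
        = -((-1:ℝ)^i * (n'.choose i) * ((i+a).choose d)) := by
      intro i _
      have : (i+1+a).choose (d+1) = (i+a).choose d + (i+a).choose (d+1) := by
        rw [show i+1+a = (i+a)+1 from by omega, Nat.choose_succ_succ]
      rw [this]
      push_cast
      ring
    rw [Finset.sum_congr rfl this, Finset.sum_neg_distrib]
    rw [ih n' a (by omega)]
    simp

/-- L2 -/
private lemma L2 : ∀ (M L a : ℕ), M ≤ L →
    ∑ m ∈ range (M+1), (-1:ℝ)^m * (M.choose m) * ((a+m).choose L)
      = (-1:ℝ)^M * (a.choose (L - M)) := by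
  intro M
  induction M with
  | zero => intro L a _; simp
  | succ M ih =>
    intro L a hM
    obtain ⟨L', rfl⟩ : ∃ L', L = L' + 1 := ⟨L - 1, by omega⟩
    rw [fd_step (fun m => ((a+m).choose (L'+1) : ℝ)) M]
    have : ∀ m ∈ range (M+1),
        (-1:ℝ)^m * (M.choose m) * (((a+m).choose (L'+1) : ℝ) - ((a+(m+1)).choose (L'+1) : ℝ))
        = -((-1:ℝ)^m * (M.choose m) * ((a+m).choose L')) := by
      intro m _
      have : (a+(m+1)).choose (L'+1) = (a+m).choose L' + (a+m).choose (L'+1) := by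
        rw [show a+(m+1) = (a+m)+1 from by omega, Nat.choose_succ_succ]
      rw [this]
      push_cast
      ring
    rw [Finset.sum_congr rfl this, Finset.sum_neg_distrib, ih L' a (by omega)]
    have : L' + 1 - (M + 1) = L' - M := by omega
    rw [this]
    ring

private lemma L3 (M l : ℕ) :
    ∑ m ∈ range (M+1), (-1:ℝ)^m * (M.choose m) * ((l+m).choose m)
      = (-1:ℝ)^M * (l.choose M) := by
  have hsym : ∀ m : ℕ, ((l+m).choose m : ℝ) = ((l+m).choose l : ℝ) := by
    intro m
    rw [Nat.choose_symm_add]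
  simp only [hsym]
  rcases le_or_gt M l with h | h
  · rw [L2 M l l h, Nat.choose_symm h]
  · rw [Nat.choose_eq_zero_of_lt h]
    push_cast
    rw [mul_zero]
    have := L1 l M l h
    convert this using 2 with m hm
    rw [add_comm]

private lemma L4 (i p : ℕ) :
    ∑ M ∈ range (i+1), (-1:ℝ)^M * (i.choose M) * (M.choose p)
      = if i = p then (-1:ℝ)^i else 0 := by
  rcases le_or_gt i p with h | h
  · have := L2 i p 0 h
    simp only [zero_add] at this
    rw [this]
    rcases eq_or_lt_of_le h with rfl | hlt
    · simp
    · rw [if_neg (by omega), Nat.choose_eq_zero_of_lt (by omega : 0 < p - i)]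
      simp
  · rw [if_neg (by omega)]
    have := L1 p i 0 h
    simpa using this

private lemma Qinv_diag (H : ℕ → ℕ → ℝ) (k m : ℕ) (hk : 1 ≤ k) :
    Qinv H (k + m) (m + 1) k = ∏ r ∈ Finset.range (m+1), H (k + r) (k + r) := by
  have hlt : ∀ r : Fin (m+1), k + (r : ℕ) < k + m + 1 := fun r => by
    have := r.isLt; omega
  set f₀ : Fin (m+1) → Fin (k+m+1) × Fin (k+m+1) :=
    fun r => (⟨k + r, hlt r⟩, ⟨k + r, hlt r⟩) with hf₀
  have key : ∀ f : Fin (m+1) → Fin (k+m+1) × Fin (k+m+1),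
      ((∀ r, 1 ≤ ((f r).2 : ℕ) ∧ ((f r).2 : ℕ) ≤ ((f r).1 : ℕ)) ∧
        (∀ r : Fin m, ((f r.castSucc).1 : ℕ) < ((f r.succ).2 : ℕ)) ∧
        ((f 0).2 : ℕ) = k) → f = f₀ := by
    intro f ⟨h1, h2, h3⟩
    -- lower bounds on second components
    have lb : ∀ r : ℕ, ∀ h : r < m + 1, k + r ≤ ((f ⟨r, h⟩).2 : ℕ) := by
      intro r
      induction r with
      | zero => intro h; simpa using h3.ge
      | succ r ih =>
        intro h
        have hr : r < m := by omega
        have hcs := h2 ⟨r, hr⟩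
        have e1 : (⟨r, hr⟩ : Fin m).castSucc = (⟨r, by omega⟩ : Fin (m+1)) := rfl
        have e2 : (⟨r, hr⟩ : Fin m).succ = (⟨r+1, h⟩ : Fin (m+1)) := rfl
        rw [e1, e2] at hcs
        have := (h1 ⟨r, by omega⟩).2
        have := ih (by omega)
        omega
    -- chain: first components strictly increase
    have mono : ∀ d r : ℕ, ∀ h : r + d < m + 1,
        ((f ⟨r, by omega⟩).1 : ℕ) + d ≤ ((f ⟨r + d, h⟩).1 : ℕ) := by
      intro d
      induction d with
      | zero => intro r h; simp
      | succ d ih =>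
        intro r h
        have hrd : r + d < m := by omega
        have hcs := h2 ⟨r + d, hrd⟩
        have e1 : (⟨r + d, hrd⟩ : Fin m).castSucc = (⟨r + d, by omega⟩ : Fin (m+1)) := rfl
        have e2 : (⟨r + d, hrd⟩ : Fin m).succ = (⟨r + d + 1, by omega⟩ : Fin (m+1)) := rfl
        rw [e1, e2] at hcs
        have h5 := (h1 ⟨r + d + 1, by omega⟩).2
        have h6 := ih r (by omega)
        have : (⟨r + (d+1), h⟩ : Fin (m+1)) = (⟨r + d + 1, by omega⟩ : Fin (m+1)) := by
          apply Fin.ext; simp [Nat.add_assoc]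
        rw [this]
        omega
    have ub : ∀ r : ℕ, ∀ h : r < m + 1, ((f ⟨r, h⟩).1 : ℕ) ≤ k + r := by
      intro r h
      have h7 := mono (m - r) r (by omega)
      have e : (⟨r + (m - r), by omega⟩ : Fin (m+1)) = (⟨m, by omega⟩ : Fin (m+1)) := by
        apply Fin.ext; simp; omega
      rw [e] at h7
      have h8 : ((f ⟨m, by omega⟩).1 : ℕ) ≤ k + m := by
        have := (f ⟨m, by omega⟩).1.isLt; omega
      omega
    funext r
    obtain ⟨rv, hr⟩ := r
    have hlb := lb rv hr
    have hub := ub rv hr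
    have h9 := (h1 ⟨rv, hr⟩).2
    have e1 : ((f ⟨rv, hr⟩).1 : ℕ) = k + rv := by omega
    have e2 : ((f ⟨rv, hr⟩).2 : ℕ) = k + rv := by omega
    rw [hf₀]
    apply Prod.ext
    · apply Fin.ext; simpa using e1
    · apply Fin.ext; simpa using e2
  have hP0 : (∀ r, 1 ≤ ((f₀ r).2 : ℕ) ∧ ((f₀ r).2 : ℕ) ≤ ((f₀ r).1 : ℕ)) ∧
      (∀ r : Fin m, ((f₀ r.castSucc).1 : ℕ) < ((f₀ r.succ).2 : ℕ)) ∧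
      ((f₀ 0).2 : ℕ) = k := by
    refine ⟨fun r => ⟨by simp [hf₀]; omega, by simp [hf₀]⟩, fun r => ?_, by simp [hf₀]⟩
    simp [hf₀, Fin.coe_castSucc, Fin.val_succ]
  show (∑ f : Fin (m + 1) → Fin (k + m + 1) × Fin (k + m + 1),
      if (∀ r, 1 ≤ ((f r).2 : ℕ) ∧ ((f r).2 : ℕ) ≤ ((f r).1 : ℕ)) ∧
          (∀ r : Fin m, ((f r.castSucc).1 : ℕ) < ((f r.succ).2 : ℕ)) ∧
          ((f 0).2 : ℕ) = k then
        ∏ r, H ((f r).1 : ℕ) ((f r).2 : ℕ)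
      else 0) = _
  rw [Finset.sum_eq_single f₀]
  · rw [if_pos hP0]
    rw [← Fin.prod_univ_eq_prod_range (fun r => H (k + r) (k + r)) (m+1)]
  · intro f _ hne
    rw [if_neg]
    intro hP
    exact hne (key f hP)
  · intro h
    exact absurd (Finset.mem_univ f₀) h

/-- **Top-sparsity pattern reduces to a linear relation on Q-functions (Prop 8.1).**
For an H-matrix with nonzero diagonal entries and fixed `j ∈ {1,…,N−2}`, the vanishing
`λ*_{k,j}(H) = 0` for `k = j+2,…,N` holds iff
`Q(N−1,k,j;H) = C(N−j−1,k−1)·Q(N−1,N−j,j;H)` for `k = 1,…,N−j−1`. -/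
theorem top_sparsity_characterization (N : ℕ) (hN : 3 ≤ N) (H : ℕ → ℕ → ℝ)
    (hdiag : ∀ i, 1 ≤ i → i ≤ N - 1 → H i i ≠ 0)
    (j : ℕ) (hj1 : 1 ≤ j) (hj : j ≤ N - 2) :
    (∀ k, j + 2 ≤ k → k ≤ N → lamStar N H k j = 0) ↔
    (∀ k, 1 ≤ k → k ≤ N - j - 1 →
      Qinv H (N - 1) k j
        = (Nat.choose (N - j - 1) (k - 1) : ℝ) * Qinv H (N - 1) (N - j) j) := by
  have hn1 : 1 ≤ N - j - 1 := by omega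
  set n := N - j - 1 with hn
  have hNj : N - j = n + 1 := by omega
  have hNne : (N:ℝ) ≠ 0 := Nat.cast_ne_zero.mpr (by omega)
  set A : ℕ → ℝ := fun m =>
    ∑ i ∈ range (n+1), (-1:ℝ)^i * ((i+1+m).choose m) * Qinv H (N-1) (i+1) j with hAdef
  have hlamN : lamStar N H N j = (N:ℝ) * A 0 := by
    simp only [lamStar, hAdef, if_true, eq_self_iff_true]
    rw [hNj, icc_shift n (fun m => (-1:ℝ)^(m-1) * Qinv H (N-1) m j)]
    congr 1
    apply Finset.sum_congr rfl
    intro i _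
    simp [Nat.add_sub_cancel]
  have hlamk : ∀ k, j + 2 ≤ k → k ≤ N - 1 → lamStar N H k j
      = (N:ℝ) * ∑ m ∈ Finset.Icc 1 (N-k), (-1:ℝ)^m * A m * Qinv H (N-1) m k := by
    intro k hk1 hk2
    simp only [lamStar, if_neg (by omega : k ≠ N)]
    congr 1
    rw [hNj, icc_shift n (fun l => ∑ m ∈ Finset.Icc 1 (N-k),
      (-1:ℝ)^(l+m-1) * ((l+m).choose m : ℝ) * Qinv H (N-1) l j * Qinv H (N-1) m k)]
    rw [Finset.sum_comm]
    apply Finset.sum_congr rfl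
    intro m _
    simp only [hAdef, Finset.mul_sum, Finset.sum_mul]
    apply Finset.sum_congr rfl
    intro i _
    rw [show i+1+m-1 = i+m from by omega, pow_add]
    ring
  have hQd : ∀ m, 1 ≤ m → m ≤ N - 2 → Qinv H (N-1) m (N-m) ≠ 0 := by
    intro m hm1 hm2
    obtain ⟨m', rfl⟩ : ∃ m', m = m' + 1 := ⟨m - 1, by omega⟩
    rw [show N - 1 = (N - (m'+1)) + m' from by omega,
      Qinv_diag H (N - (m'+1)) m' (by omega)]
    rw [Finset.prod_ne_zero_iff]
    intro r hr
    have hr' : r < m' + 1 := Finset.mem_range.mp hr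
    exact hdiag _ (by omega) (by omega)
  constructor
  · -- forward direction
    intro hlam
    have hA0 : A 0 = 0 := by
      have h := hlam N (by omega) le_rfl
      rw [hlamN] at h
      exact (mul_eq_zero.mp h).resolve_left hNne
    have hAm : ∀ m, m < n → A m = 0 := by
      intro m
      induction m using Nat.strong_induction_on with
      | _ m IH =>
        intro hm
        rcases Nat.eq_zero_or_pos m with rfl | hm1
        · exact hA0
        · have hk1 : j + 2 ≤ N - m := by omega
          have hk2 : N - m ≤ N - 1 := by omega
          have h := hlam (N - m) hk1 (by omega)
          rw [hlamk (N - m) hk1 hk2, show N - (N - m) = m from by omega] at h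
          have h2 : ∑ m' ∈ Finset.Icc 1 m, (-1:ℝ)^m' * A m' * Qinv H (N-1) m' (N-m)
              = (-1:ℝ)^m * A m * Qinv H (N-1) m (N-m) := by
            rw [Finset.sum_eq_single m]
            · intro b hb hbne
              have hb' := Finset.mem_Icc.mp hb
              rw [IH b (by omega) (by omega)]
              ring
            · intro hmem
              exact absurd (Finset.mem_Icc.mpr ⟨hm1, le_rfl⟩) hmem
          rw [h2] at h
          have h3 := (mul_eq_zero.mp h).resolve_left hNne
          have h4 := (mul_eq_zero.mp h3).resolve_right (hQd m hm1 (by omega))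
          exact (mul_eq_zero.mp h4).resolve_left
            (pow_ne_zero m (by norm_num : (-1:ℝ) ≠ 0))
    have hB : ∀ M, M < n →
        ∑ i ∈ range (n+1), (-1:ℝ)^i * ((i+1).choose M) * Qinv H (N-1) (i+1) j = 0 := by
      intro M hM
      have hz : ∑ m ∈ range (M+1), (-1:ℝ)^m * (M.choose m) * A m = 0 :=
        Finset.sum_eq_zero (fun m hm => by
          rw [hAm m (by have := Finset.mem_range.mp hm; omega)]; ring)
      have hswap : ∑ m ∈ range (M+1), (-1:ℝ)^m * (M.choose m) * A m
          = (-1:ℝ)^M * ∑ i ∈ range (n+1),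
              (-1:ℝ)^i * ((i+1).choose M) * Qinv H (N-1) (i+1) j := by
        calc ∑ m ∈ range (M+1), (-1:ℝ)^m * (M.choose m) * A m
            = ∑ i ∈ range (n+1), ∑ m ∈ range (M+1), (-1:ℝ)^m * (M.choose m) *
                ((-1:ℝ)^i * ((i+1+m).choose m) * Qinv H (N-1) (i+1) j) := by
              rw [Finset.sum_comm]
              apply Finset.sum_congr rfl
              intro m _
              simp only [hAdef]
              rw [Finset.mul_sum]
          _ = ∑ i ∈ range (n+1), (-1:ℝ)^M * ((-1:ℝ)^i * ((i+1).choose M) *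
                Qinv H (N-1) (i+1) j) := by
              apply Finset.sum_congr rfl
              intro i _
              calc ∑ m ∈ range (M+1), (-1:ℝ)^m * (M.choose m) *
                    ((-1:ℝ)^i * ((i+1+m).choose m) * Qinv H (N-1) (i+1) j)
                  = (∑ m ∈ range (M+1), (-1:ℝ)^m * (M.choose m) * (((i+1)+m).choose m)) *
                      ((-1:ℝ)^i * Qinv H (N-1) (i+1) j) := by
                    rw [Finset.sum_mul]
                    apply Finset.sum_congr rfl
                    intro m _
                    ring
                _ = _ := by rw [L3 M (i+1)]; ring
          _ = _ := by
              rw [Finset.mul_sum]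
      rw [hswap] at hz
      exact (mul_eq_zero.mp hz).resolve_left (pow_ne_zero M (by norm_num : (-1:ℝ) ≠ 0))
    have hD : ∀ M, M < n →
        ∑ i ∈ range (n+1), (-1:ℝ)^i * (i.choose M) * Qinv H (N-1) (i+1) j = 0 := by
      intro M
      induction M with
      | zero =>
        intro h0
        have := hB 0 h0
        simpa using this
      | succ M ih =>
        intro hM
        have hBs := hB (M+1) hM
        have hDM := ih (by omega)
        have hsplit : ∑ i ∈ range (n+1), (-1:ℝ)^i * ((i+1).choose (M+1)) * Qinv H (N-1) (i+1) j
            = ∑ i ∈ range (n+1), (-1:ℝ)^i * (i.choose M) * Qinv H (N-1) (i+1) j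
              + ∑ i ∈ range (n+1), (-1:ℝ)^i * (i.choose (M+1)) * Qinv H (N-1) (i+1) j := by
          rw [← Finset.sum_add_distrib]
          apply Finset.sum_congr rfl
          intro i _
          rw [Nat.choose_succ_succ]
          push_cast
          ring
        rw [hsplit, hDM, zero_add] at hBs
        exact hBs
    have hDn : ∑ i ∈ range (n+1), (-1:ℝ)^i * (i.choose n) * Qinv H (N-1) (i+1) j
        = (-1:ℝ)^n * Qinv H (N-1) (n+1) j := by
      rw [Finset.sum_eq_single n]
      · simp
      · intro b hb hbne
        rw [Nat.choose_eq_zero_of_lt (by have := Finset.mem_range.mp hb; omega)]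
        simp
      · intro h
        exact absurd (Finset.self_mem_range_succ n) h
    intro k hk1 hk2
    rw [hNj]
    have hpow : ∀ t : ℕ, (-1:ℝ)^t * (-1:ℝ)^t = 1 := by
      intro t
      rw [← pow_add, ← two_mul, pow_mul]
      norm_num
    have hS1 : ∑ M ∈ range (n+1), (-1:ℝ)^M * (M.choose (k-1)) *
          (∑ i ∈ range (n+1), (-1:ℝ)^i * (i.choose M) * Qinv H (N-1) (i+1) j)
        = (n.choose (k-1) : ℝ) * Qinv H (N-1) (n+1) j := by
      rw [Finset.sum_eq_single n]
      · rw [hDn]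
        have := hpow n
        calc (-1:ℝ)^n * (n.choose (k-1)) * ((-1:ℝ)^n * Qinv H (N-1) (n+1) j)
            = ((-1:ℝ)^n * (-1:ℝ)^n) * ((n.choose (k-1)) * Qinv H (N-1) (n+1) j) := by ring
          _ = _ := by rw [this, one_mul]
      · intro b hb hbne
        rw [hD b (by have := Finset.mem_range.mp hb; omega)]
        ring
      · intro h
        exact absurd (Finset.self_mem_range_succ n) h
    have hS2 : ∑ M ∈ range (n+1), (-1:ℝ)^M * (M.choose (k-1)) *
          (∑ i ∈ range (n+1), (-1:ℝ)^i * (i.choose M) * Qinv H (N-1) (i+1) j)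
        = Qinv H (N-1) k j := by
      calc ∑ M ∈ range (n+1), (-1:ℝ)^M * (M.choose (k-1)) *
            (∑ i ∈ range (n+1), (-1:ℝ)^i * (i.choose M) * Qinv H (N-1) (i+1) j)
          = ∑ M ∈ range (n+1), ∑ i ∈ range (n+1), (-1:ℝ)^M * (M.choose (k-1)) *
              ((-1:ℝ)^i * (i.choose M) * Qinv H (N-1) (i+1) j) := by
            apply Finset.sum_congr rfl
            intro M _
            rw [Finset.mul_sum]
        _ = ∑ i ∈ range (n+1), ∑ M ∈ range (n+1), (-1:ℝ)^M * (M.choose (k-1)) *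
              ((-1:ℝ)^i * (i.choose M) * Qinv H (N-1) (i+1) j) := Finset.sum_comm
        _ = ∑ i ∈ range (n+1), (if i = k-1 then (-1:ℝ)^i else 0) *
              ((-1:ℝ)^i * Qinv H (N-1) (i+1) j) := by
            apply Finset.sum_congr rfl
            intro i hi
            have hi' : i < n+1 := Finset.mem_range.mp hi
            have htrim : ∑ M ∈ range (n+1), (-1:ℝ)^M * (M.choose (k-1)) *
                  ((-1:ℝ)^i * (i.choose M) * Qinv H (N-1) (i+1) j)
                = ∑ M ∈ range (i+1), (-1:ℝ)^M * (M.choose (k-1)) *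
                  ((-1:ℝ)^i * (i.choose M) * Qinv H (N-1) (i+1) j) := by
              symm
              apply Finset.sum_subset (by
                intro x hx
                have := Finset.mem_range.mp hx
                exact Finset.mem_range.mpr (by omega))
              intro M _ hM
              rw [Nat.choose_eq_zero_of_lt (show i < M from by
                simp [Finset.mem_range] at hM
                omega)]
              push_cast
              ring
            rw [htrim]
            calc ∑ M ∈ range (i+1), (-1:ℝ)^M * (M.choose (k-1)) *
                  ((-1:ℝ)^i * (i.choose M) * Qinv H (N-1) (i+1) j)
                = (∑ M ∈ range (i+1), (-1:ℝ)^M * (i.choose M) * (M.choose (k-1))) *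
                    ((-1:ℝ)^i * Qinv H (N-1) (i+1) j) := by
                  rw [Finset.sum_mul]
                  apply Finset.sum_congr rfl
                  intro M _
                  ring
              _ = _ := by rw [L4 i (k-1)]
        _ = Qinv H (N-1) k j := by
            rw [Finset.sum_eq_single (k-1)]
            · rw [if_pos rfl, show k-1+1 = k from by omega]
              calc (-1:ℝ)^(k-1) * ((-1:ℝ)^(k-1) * Qinv H (N-1) k j)
                  = ((-1:ℝ)^(k-1) * (-1:ℝ)^(k-1)) * Qinv H (N-1) k j := by ring
                _ = _ := by rw [hpow, one_mul]
            · intro b hb hbne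
              rw [if_neg hbne, zero_mul]
            · intro h
              exact absurd (Finset.mem_range.mpr (by omega : k - 1 < n + 1)) h
    rw [← hS2, hS1]
  · -- backward direction
    intro hq
    have hq3 : ∀ i, i < n+1 →
        Qinv H (N-1) (i+1) j = ((n.choose i):ℝ) * Qinv H (N-1) (n+1) j := by
      intro i hi
      rcases eq_or_lt_of_le (by omega : i ≤ n) with rfl | hlt
      · simp
      · have h := hq (i+1) (by omega) (by omega)
        rw [hNj] at h
        simpa using h
    have hAz : ∀ m, m < n → A m = 0 := by
      intro m hm
      simp only [hAdef]
      calc ∑ i ∈ range (n+1), (-1:ℝ)^i * ((i+1+m).choose m) * Qinv H (N-1) (i+1) j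
          = ∑ i ∈ range (n+1), ((-1:ℝ)^i * (n.choose i) * ((i+(1+m)).choose m)) *
              Qinv H (N-1) (n+1) j := by
            apply Finset.sum_congr rfl
            intro i hi
            rw [hq3 i (Finset.mem_range.mp hi), show i+1+m = i+(1+m) from by omega]
            ring
        _ = 0 := by
            rw [← Finset.sum_mul, L1 m n (1+m) hm, zero_mul]
    intro k hk1 hk2
    by_cases hkN : k = N
    · subst hkN
      rw [hlamN, hAz 0 (by omega), mul_zero]
    · rw [hlamk k hk1 (by omega)]
      rw [Finset.sum_eq_zero, mul_zero]
      intro m hm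
      have hm' := Finset.mem_Icc.mp hm
      rw [hAz m (by omega)]
      ring
end
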